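/- arXiv:2205.07607 — 2 statements merged into one kernel-verified Lean document; each statement's English description precedes it below -/
import Mathlib

section
/- Let L be the Laplacian matrix of a strongly connected weighted directed graph. Then the following are equivalent: (1) L is quasi-sectorial; (2) L is semi-sectorial; (3) the graph is weight-balanced, i.e., L𝟙 = 0 and 𝟙ᵀL = 0. -/
open Matrix Complex Real

noncomputable section

/-- The numerical range (field of values) of a square complex matrix. -/
def numRange {ι : Type*} [Fintype ι] (C : Matrix ι ι ℂ) : Set ℂ :=
  {z | ∃ x : ι → ℂ, star x ⬝ᵥ x = 1 ∧ z = star x ⬝ᵥ C.mulVec x}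

/-- A matrix is sectorial if 0 is not in its numerical range. -/
def Sectorial {ι : Type*} [Fintype ι] (C : Matrix ι ι ℂ) : Prop := (0 : ℂ) ∉ numRange C

/-- A matrix is semi-sectorial if its numerical range lies in a closed half-plane
through the origin. -/
def SemiSectorial {ι : Type*} [Fintype ι] (C : Matrix ι ι ℂ) : Prop :=
  ∃ θ : ℝ, ∀ x : ι → ℂ, 0 ≤ (Complex.exp (-(θ : ℂ) * Complex.I) * (star x ⬝ᵥ C.mulVec x)).re

/-- A matrix is quasi-sectorial if it is unitarily similar to `diag(0, Cs)` with `Cs`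
sectorial (equivalently, its angular numerical range is a salient cone of angle `< π`). -/
def QuasiSectorial {ι : Type*} [Fintype ι] [DecidableEq ι] (C : Matrix ι ι ℂ) : Prop :=
  ∃ (k r : ℕ) (e : (Fin k ⊕ Fin r) ≃ ι) (U : Matrix ι ι ℂ) (Cs : Matrix (Fin r) (Fin r) ℂ),
    Uᴴ * U = 1 ∧ U * Uᴴ = 1 ∧ Sectorial Cs ∧
    C = U * (Matrix.reindex e e (Matrix.fromBlocks 0 0 0 Cs)) * Uᴴ

/-- The canonical middle factor of the generalized sectorial decomposition:
`diag(0_{n0}, diag(e^{jθ_1},…,e^{jθ_m}), E)` where `E` consists of `p` copies of the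
`2×2` block `e^{jθ0} [[1,2],[0,1]]`. -/
def gsdMat (n0 m p : ℕ) (θ : Fin m → ℝ) (θ0 : ℝ) :
    Matrix ((Fin n0 ⊕ Fin m) ⊕ (Fin 2 × Fin p)) ((Fin n0 ⊕ Fin m) ⊕ (Fin 2 × Fin p)) ℂ :=
  Matrix.fromBlocks
    (Matrix.fromBlocks 0 0 0 (Matrix.diagonal fun i => Complex.exp ((θ i : ℂ) * Complex.I)))
    0 0
    (Matrix.blockDiagonal fun _ : Fin p => Complex.exp ((θ0 : ℂ) * Complex.I) • (!![1, 2; 0, 1] : Matrix (Fin 2) (Fin 2) ℂ))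

/-- `HasPhases C φ` says that `φ` (nonincreasing, of length `r = rank C`) is a vector of
phases of the semi-sectorial matrix `C`, arising from a generalized sectorial decomposition
`C = Tᴴ (diag(0, D, E)) T`: the entries of `φ` are the angles `θ_1 ≥ … ≥ θ_m` of `D`
together with `p` copies of each of `θ0 ± π/2`. -/
def HasPhases {ι : Type*} [Fintype ι] [DecidableEq ι] (C : Matrix ι ι ℂ) {r : ℕ}
    (φ : Fin r → ℝ) : Prop :=
  Antitone φ ∧
  ∃ (n0 m p : ℕ) (θ : Fin m → ℝ) (θ0 : ℝ)
    (e : ((Fin n0 ⊕ Fin m) ⊕ (Fin 2 × Fin p)) ≃ ι) (T : Matrix ι ι ℂ),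
    IsUnit T.det ∧
    (∀ i, θ0 - π/2 ≤ θ i ∧ θ i ≤ θ0 + π/2) ∧
    C = Tᴴ * (Matrix.reindex e e (gsdMat n0 m p θ θ0)) * T ∧
    Multiset.map φ Finset.univ.val =
      Multiset.map θ Finset.univ.val + Multiset.replicate p (θ0 + π/2)
        + Multiset.replicate p (θ0 - π/2)

/-- `B` is the Moore–Penrose pseudoinverse of `A`. -/
def IsMoorePenrose {k l : Type*} [Fintype k] [Fintype l]
    (A : Matrix k l ℂ) (B : Matrix l k ℂ) : Prop :=
  A * B * A = A ∧ B * A * B = B ∧ (A * B)ᴴ = A * B ∧ (B * A)ᴴ = B * A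

/-- `Majorized x y` : the real vector `x` is majorized by `y`. -/
def Majorized {r : ℕ} (x y : Fin r → ℝ) : Prop :=
  (∀ A : Finset (Fin r), ∃ B : Finset (Fin r), B.card = A.card ∧ ∑ i ∈ A, x i ≤ ∑ i ∈ B, y i)
  ∧ ∑ i, x i = ∑ i, y i


/-- The Laplacian matrix of the weighted digraph with weight `a i j` on the edge from `j` to
`i` (off-diagonal entries `-a i j`, diagonal entries the row sums of the weights). -/
def lapMat {n : ℕ} (a : Fin n → Fin n → ℝ) : Matrix (Fin n) (Fin n) ℝ :=
  Matrix.of fun i j => if i = j then ∑ k, a i k else - a i j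

lemma lap_colsum_eq {n : ℕ} (a : Fin n → Fin n → ℝ) (hdiag : ∀ i, a i i = 0) (j : Fin n) :
    ∑ i, lapMat a i j = (∑ k, a j k) - ∑ i, a i j := by
  have h : ∀ i, lapMat a i j = (if i = j then (∑ k, a j k) + a i j else 0) - a i j := by
    intro i
    by_cases hij : i = j
    · subst hij; simp [lapMat]
    · simp [lapMat, hij]
  rw [Finset.sum_congr rfl fun i _ => h i, Finset.sum_sub_distrib]
  simp [Finset.sum_ite_eq', hdiag]

lemma lap_col_sum {n : ℕ} (a : Fin n → Fin n → ℝ) (hdiag : ∀ i, a i i = 0)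
    (hbal : ∀ j, ∑ i, a i j = ∑ k, a j k) (j : Fin n) :
    ∑ i, lapMat a i j = 0 := by
  rw [lap_colsum_eq a hdiag j, hbal j, sub_self]

lemma bal_iff_vecMul {n : ℕ} (a : Fin n → Fin n → ℝ) (hdiag : ∀ i, a i i = 0) :
    Matrix.vecMul (fun _ => 1) (lapMat a) = 0 ↔ (∀ j, ∑ i, a i j = ∑ k, a j k) := by
  constructor
  · intro h j
    have h1 := congrFun h j
    simp only [Matrix.vecMul, dotProduct, one_mul, Pi.zero_apply] at h1
    rw [lap_colsum_eq a hdiag j] at h1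
    linarith
  · intro h
    funext j
    simp only [Matrix.vecMul, dotProduct, one_mul, Pi.zero_apply]
    rw [lap_colsum_eq a hdiag j, h j, sub_self]

lemma lap_row_sum {n : ℕ} (a : Fin n → Fin n → ℝ) (hdiag : ∀ i, a i i = 0) (i : Fin n) :
    ∑ j, lapMat a i j = 0 := by
  have h : ∀ j, lapMat a i j = (if i = j then (∑ k, a i k) + a i j else 0) - a i j := by
    intro j
    by_cases hij : i = j
    · subst hij; simp [lapMat, hdiag]
    · simp [lapMat, hij]
  rw [Finset.sum_congr rfl fun j _ => h j, Finset.sum_sub_distrib]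
  simp [Finset.sum_ite_eq, hdiag]

lemma quad_eq {n : ℕ} (A : Matrix (Fin n) (Fin n) ℝ) (x : Fin n → ℂ) :
    star x ⬝ᵥ (A.map (fun t : ℝ => (t : ℂ))).mulVec x
      = ∑ i, ∑ j, (A i j : ℂ) * ((starRingEnd ℂ) (x i) * x j) := by
  simp only [dotProduct, mulVec, Pi.star_apply, Finset.mul_sum, Matrix.map_apply,
    RCLike.star_def]
  exact Finset.sum_congr rfl fun i _ => Finset.sum_congr rfl fun j _ => by ring

lemma quadratic_nonneg_linear_zero (A B : ℝ) (h : ∀ s : ℝ, 0 ≤ A * s ^ 2 + B * s) : B = 0 := by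
  have hA : 0 ≤ A := by have h1 := h 1; have h2 := h (-1); nlinarith
  have hA1 : 0 < A + 1 := by linarith
  have h3 := h (-B / (A + 1))
  rw [div_pow, neg_pow] at h3
  have h4 : 0 ≤ (A * (B ^ 2 / (A + 1) ^ 2) - B ^ 2 / (A + 1)) * (A + 1) ^ 2 := by
    apply mul_nonneg _ (sq_nonneg _)
    calc (0:ℝ) ≤ A * ((-1) ^ 2 * B ^ 2 / (A + 1) ^ 2) + B * (-B / (A + 1)) := h3
    _ = A * (B ^ 2 / (A + 1) ^ 2) - B ^ 2 / (A + 1) := by ring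
  have h5 : (A * (B ^ 2 / (A + 1) ^ 2) - B ^ 2 / (A + 1)) * (A + 1) ^ 2 = -B ^ 2 := by
    field_simp; ring
  nlinarith [sq_nonneg B]

lemma quad_re {n : ℕ} (a : Fin n → Fin n → ℝ) (hdiag : ∀ i, a i i = 0)
    (hbal : ∀ j, ∑ i, a i j = ∑ k, a j k) (x : Fin n → ℂ) :
    2 * (star x ⬝ᵥ ((lapMat a).map (fun t : ℝ => (t : ℂ))).mulVec x).re
      = ∑ i, ∑ j, a i j * Complex.normSq (x i - x j) := by
  set c : Fin n → Fin n → ℝ := fun i j => ((starRingEnd ℂ) (x i) * x j).re with hc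
  have hre : (star x ⬝ᵥ ((lapMat a).map (fun t : ℝ => (t : ℂ))).mulVec x).re
      = ∑ i, ∑ j, lapMat a i j * c i j := by
    rw [quad_eq, Complex.re_sum]
    refine Finset.sum_congr rfl fun i _ => ?_
    rw [Complex.re_sum]
    exact Finset.sum_congr rfl fun j _ => Complex.re_ofReal_mul _ _
  have hrow : ∀ i, ∑ j, lapMat a i j * c i j
      = (∑ k, a i k) * c i i - ∑ j, a i j * c i j := by
    intro i
    have h : ∀ j, lapMat a i j * c i j
        = (if i = j then ((∑ k, a i k) + a i j) * c i j else 0) - a i j * c i j := by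
      intro j
      by_cases hij : i = j
      · subst hij; simp [lapMat, hdiag]
      · simp only [lapMat, Matrix.of_apply, if_neg hij]; ring
    rw [Finset.sum_congr rfl fun j _ => h j, Finset.sum_sub_distrib]
    simp [Finset.sum_ite_eq, hdiag]
  have hns : ∀ i j, Complex.normSq (x i - x j) = c i i + c j j - 2 * c i j := by
    intro i j
    simp only [hc, Complex.normSq_apply, Complex.mul_re, Complex.sub_re, Complex.sub_im,
      Complex.conj_re, Complex.conj_im]
    ring
  have hswap : ∑ i, ∑ j, a i j * c j j = ∑ i, ∑ j, a i j * c i i := by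
    rw [Finset.sum_comm]
    calc ∑ j, ∑ i, a i j * c j j = ∑ j, (∑ i, a i j) * c j j := by
          simp [Finset.sum_mul]
      _ = ∑ j, (∑ k, a j k) * c j j := Finset.sum_congr rfl fun j _ => by rw [hbal j]
      _ = ∑ j, ∑ k, a j k * c j j := by simp [Finset.sum_mul]
  have hdiagsum : ∑ i, (∑ k, a i k) * c i i = ∑ i, ∑ j, a i j * c i i :=
    Finset.sum_congr rfl fun i _ => Finset.sum_mul ..
  calc 2 * (star x ⬝ᵥ ((lapMat a).map (fun t : ℝ => (t : ℂ))).mulVec x).re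
      = 2 * ∑ i, ((∑ k, a i k) * c i i - ∑ j, a i j * c i j) := by
        rw [hre, Finset.sum_congr rfl fun i _ => hrow i]
    _ = 2 * (∑ i, ∑ j, a i j * c i i) - 2 * (∑ i, ∑ j, a i j * c i j) := by
        rw [Finset.sum_sub_distrib, hdiagsum]; ring
    _ = (∑ i, ∑ j, a i j * c i i) + (∑ i, ∑ j, a i j * c j j)
          - 2 * (∑ i, ∑ j, a i j * c i j) := by rw [hswap]; ring
    _ = ∑ i, ∑ j, a i j * Complex.normSq (x i - x j) := by
        simp only [← Finset.sum_add_distrib, ← Finset.sum_sub_distrib, Finset.mul_sum]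
        refine Finset.sum_congr rfl fun i _ => Finset.sum_congr rfl fun j _ => ?_
        rw [hns i j]; ring

lemma re_exp_mul (θ A B : ℝ) :
    (Complex.exp (-(θ:ℂ) * Complex.I) * ((A:ℂ) + (B:ℂ) * Complex.I)).re
      = Real.cos θ * A + Real.sin θ * B := by
  have h : -(θ:ℂ) * Complex.I = ((-θ : ℝ):ℂ) * Complex.I := by push_cast; ring
  rw [h, Complex.exp_mul_I, ← Complex.ofReal_cos, ← Complex.ofReal_sin]
  simp [Complex.add_re, Complex.mul_re, Real.cos_neg, Real.sin_neg,
    Complex.cos_ofReal_re, Complex.sin_ofReal_re]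

lemma quad_test {n : ℕ} (a : Fin n → Fin n → ℝ) (hdiag : ∀ i, a i i = 0)
    (k : Fin n) (z : ℂ) :
    star (fun i => 1 + if i = k then z else 0) ⬝ᵥ
        ((lapMat a).map (fun t : ℝ => (t : ℂ))).mulVec (fun i => 1 + if i = k then z else 0)
      = ((∑ i, lapMat a i k : ℝ) : ℂ) * z
        + ((lapMat a k k : ℝ) : ℂ) * (Complex.normSq z : ℂ) := by
  have hrow : ∀ i, ∑ j, lapMat a i j = 0 := by
    intro i
    have h : ∀ j, lapMat a i j = (if i = j then (∑ k, a i k) + a i j else 0) - a i j := by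
      intro j
      by_cases hij : i = j
      · subst hij; simp [lapMat, hdiag]
      · simp [lapMat, hij]
    rw [Finset.sum_congr rfl fun j _ => h j, Finset.sum_sub_distrib]
    simp [Finset.sum_ite_eq, hdiag]
  rw [quad_eq]
  have hterm : ∀ i j, (lapMat a i j : ℂ) *
      ((starRingEnd ℂ) (1 + if i = k then z else 0) * (1 + if j = k then z else 0))
      = (lapMat a i j : ℂ) + (lapMat a i j : ℂ) * (if j = k then z else 0)
        + (lapMat a i j : ℂ) * (if i = k then (starRingEnd ℂ) z else 0)
        + (if i = k then (if j = k then (lapMat a i j : ℂ) * ((starRingEnd ℂ) z * z) else 0) else 0) := by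
    intro i j
    by_cases hik : i = k <;> by_cases hjk : j = k <;> simp [hik, hjk] <;> ring
  rw [Finset.sum_congr rfl fun i _ => Finset.sum_congr rfl fun j _ => hterm i j]
  simp only [Finset.sum_add_distrib]
  have S1 : ∑ i : Fin n, ∑ j : Fin n, (lapMat a i j : ℂ) = 0 := by
    refine Finset.sum_eq_zero fun i _ => ?_
    rw [← Complex.ofReal_sum]
    norm_cast
    exact hrow i
  have S2 : ∑ i : Fin n, ∑ j : Fin n, (lapMat a i j : ℂ) * (if j = k then z else 0)
      = ((∑ i, lapMat a i k : ℝ) : ℂ) * z := by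
    push_cast
    rw [Finset.sum_mul]
    refine Finset.sum_congr rfl fun i _ => ?_
    simp [Finset.sum_ite_eq', mul_ite]
  have S3 : ∑ i : Fin n, ∑ j : Fin n, (lapMat a i j : ℂ) * (if i = k then (starRingEnd ℂ) z else 0)
      = 0 := by
    refine Finset.sum_eq_zero fun i _ => ?_
    by_cases hik : i = k
    · subst hik
      simp only [if_pos rfl, ← Finset.sum_mul]
      rw [← Complex.ofReal_sum]
      rw [show (∑ j, lapMat a i j) = 0 from hrow i]
      simp
    · simp [hik]
  have S4 : ∑ i : Fin n, ∑ j : Fin n,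
      (if i = k then (if j = k then (lapMat a i j : ℂ) * ((starRingEnd ℂ) z * z) else 0) else 0)
      = ((lapMat a k k : ℝ) : ℂ) * (Complex.normSq z : ℂ) := by
    simp [Finset.sum_ite_eq', Complex.normSq_eq_conj_mul_self]
  rw [S1, S2, S3, S4]
  ring

lemma semi_to_bal {n : ℕ} (a : Fin n → Fin n → ℝ) (hdiag : ∀ i, a i i = 0)
    (h : SemiSectorial ((lapMat a).map (fun x : ℝ => (x : ℂ)))) :
    Matrix.vecMul (fun _ => 1) (lapMat a) = 0 := by
  obtain ⟨θ, hθ⟩ := h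
  funext k
  have hC : ∑ i, lapMat a i k = 0 := by
    set C := ∑ i, lapMat a i k with hCdef
    set D := lapMat a k k with hDdef
    have h1 : ∀ s : ℝ, 0 ≤ (Real.cos θ * D) * s ^ 2 + (Real.cos θ * C) * s := by
      intro s
      have := hθ (fun i => 1 + if i = k then ((s:ℂ)) else 0)
      rw [quad_test a hdiag k] at this
      have hq : ((C : ℝ) : ℂ) * (s:ℂ) + ((D : ℝ) : ℂ) * ((Complex.normSq (s:ℂ) : ℝ) : ℂ)
          = ((D * s^2 + C * s : ℝ) : ℂ) + ((0:ℝ):ℂ) * Complex.I := by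
        rw [Complex.normSq_ofReal]; push_cast; ring
      rw [hq, re_exp_mul] at this
      calc (0:ℝ) ≤ Real.cos θ * (D * s ^ 2 + C * s) + Real.sin θ * 0 := this
        _ = (Real.cos θ * D) * s ^ 2 + (Real.cos θ * C) * s := by ring
    have h2 : ∀ s : ℝ, 0 ≤ (Real.cos θ * D) * s ^ 2 + (Real.sin θ * C) * s := by
      intro s
      have := hθ (fun i => 1 + if i = k then ((s:ℂ) * Complex.I) else 0)
      rw [quad_test a hdiag k] at this
      have hq : ((C : ℝ) : ℂ) * ((s:ℂ) * Complex.I)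
            + ((D : ℝ) : ℂ) * ((Complex.normSq ((s:ℂ) * Complex.I) : ℝ) : ℂ)
          = ((D * s^2 : ℝ) : ℂ) + ((C * s : ℝ):ℂ) * Complex.I := by
        rw [Complex.normSq_mul, Complex.normSq_ofReal, Complex.normSq_I]; push_cast; ring
      rw [hq, re_exp_mul] at this
      calc (0:ℝ) ≤ Real.cos θ * (D * s ^ 2) + Real.sin θ * (C * s) := this
        _ = (Real.cos θ * D) * s ^ 2 + (Real.sin θ * C) * s := by ring
    have hc0 := quadratic_nonneg_linear_zero _ _ h1
    have hs0 := quadratic_nonneg_linear_zero _ _ h2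
    have hpyth := Real.sin_sq_add_cos_sq θ
    linear_combination Real.sin θ * hs0 + Real.cos θ * hc0 - C * hpyth
  simp only [Matrix.vecMul, dotProduct, Pi.zero_apply, one_mul]
  simpa using hC

lemma bal_to_semi {n : ℕ} (a : Fin n → Fin n → ℝ) (hnn : ∀ i j, 0 ≤ a i j)
    (hdiag : ∀ i, a i i = 0)
    (hbal : ∀ j, ∑ i, a i j = ∑ k, a j k) :
    SemiSectorial ((lapMat a).map (fun x : ℝ => (x : ℂ))) := by
  refine ⟨0, fun x => ?_⟩
  have h2 := quad_re a hdiag hbal x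
  have hnonneg : 0 ≤ ∑ i, ∑ j, a i j * Complex.normSq (x i - x j) :=
    Finset.sum_nonneg fun i _ => Finset.sum_nonneg fun j _ =>
      mul_nonneg (hnn i j) (Complex.normSq_nonneg _)
  have hre : 0 ≤ (star x ⬝ᵥ ((lapMat a).map (fun t : ℝ => (t : ℂ))).mulVec x).re := by
    linarith
  simpa using hre

lemma lap_mulVec_one {n : ℕ} (a : Fin n → Fin n → ℝ) (hdiag : ∀ i, a i i = 0) :
    (lapMat a).mulVec (fun _ => 1) = 0 := by
  funext i
  simpa [Matrix.mulVec, dotProduct] using lap_row_sum a hdiag i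

lemma lapC_mulVec_one {n : ℕ} (a : Fin n → Fin n → ℝ) (hdiag : ∀ i, a i i = 0) :
    ((lapMat a).map (fun x : ℝ => (x : ℂ))).mulVec (fun _ => 1) = 0 := by
  funext i
  simp only [Matrix.mulVec, dotProduct, Matrix.map_apply, mul_one, Pi.zero_apply]
  rw [← Complex.ofReal_sum, lap_row_sum a hdiag i, Complex.ofReal_zero]

lemma sectorial_inj {r : ℕ} {Cs : Matrix (Fin r) (Fin r) ℂ} (h : Sectorial Cs)
    {y : Fin r → ℂ} (hy : Cs.mulVec y = 0) : y = 0 := by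
  by_contra hne
  obtain ⟨i0, hi0⟩ : ∃ i, y i ≠ 0 := Function.ne_iff.mp hne
  set T : ℝ := ∑ i, Complex.normSq (y i) with hT
  have hTpos : 0 < T :=
    Finset.sum_pos' (fun i _ => Complex.normSq_nonneg _)
      ⟨i0, Finset.mem_univ _, Complex.normSq_pos.mpr hi0⟩
  set c : ℂ := (((Real.sqrt T)⁻¹ : ℝ) : ℂ) with hcdef
  set x : Fin r → ℂ := c • y with hx
  have hx1 : star x ⬝ᵥ x = 1 := by
    simp only [hx, dotProduct, Pi.smul_apply, Pi.star_apply, smul_eq_mul, star_mul']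
    have : ∀ i, star c * star (y i) * (c * y i) = (c * star c) * ((Complex.normSq (y i) : ℝ) : ℂ) := by
      intro i
      rw [Complex.normSq_eq_conj_mul_self]
      simp [RCLike.star_def]
      ring
    rw [Finset.sum_congr rfl fun i _ => this i, ← Finset.mul_sum, ← Complex.ofReal_sum, ← hT]
    have hc : c * star c = ((T⁻¹ : ℝ) : ℂ) := by
      simp [hcdef, RCLike.star_def, ← Complex.ofReal_mul]
      rw [← Real.sqrt_mul_self (le_of_lt hTpos)]
      field_simp
      rw [← Complex.ofReal_pow, Real.sq_sqrt (Real.sqrt_nonneg _)]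
    rw [hc, ← Complex.ofReal_mul, inv_mul_cancel₀ (ne_of_gt hTpos), Complex.ofReal_one]
  apply h
  refine ⟨x, hx1, ?_⟩
  rw [hx, Matrix.mulVec_smul, hy]
  simp

lemma quasi_to_bal {n : ℕ} (a : Fin n → Fin n → ℝ) (hdiag : ∀ i, a i i = 0)
    (h : QuasiSectorial ((lapMat a).map (fun x : ℝ => (x : ℂ)))) :
    Matrix.vecMul (fun _ => 1) (lapMat a) = 0 := by
  obtain ⟨k, r, e, U, Cs, hU1, hU2, hCs, hL⟩ := h
  set Lc := (lapMat a).map (fun x : ℝ => (x : ℂ)) with hLc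
  set B : Matrix (Fin n) (Fin n) ℂ := Matrix.reindex e e (Matrix.fromBlocks 0 0 0 Cs) with hB
  set w : Fin n → ℂ := Uᴴ.mulVec (fun _ => 1) with hw
  -- B *ᵥ w = 0
  have hBw : B.mulVec w = 0 := by
    have h0 : Lc.mulVec (fun _ => 1) = 0 := lapC_mulVec_one a hdiag
    have h1 : U.mulVec (B.mulVec w) = 0 := by
      rw [hw, Matrix.mulVec_mulVec, Matrix.mulVec_mulVec, ← hL]
      exact h0
    calc B.mulVec w = (Uᴴ * U).mulVec (B.mulVec w) := by rw [hU1, Matrix.one_mulVec]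
      _ = Uᴴ.mulVec (U.mulVec (B.mulVec w)) := by rw [← Matrix.mulVec_mulVec]
      _ = 0 := by rw [h1, Matrix.mulVec_zero]
  -- block analysis
  have hBw' : ∀ s, ∑ t, (Matrix.fromBlocks (0 : Matrix (Fin k) (Fin k) ℂ) 0 0 Cs) s t * w (e t) = 0 := by
    intro s
    have := congrFun hBw (e s)
    simp only [Matrix.mulVec, dotProduct, hB, Matrix.reindex_apply, Matrix.submatrix_apply,
      Equiv.symm_apply_apply, Pi.zero_apply] at this
    rw [← this]
    exact Fintype.sum_equiv e (fun t => (Matrix.fromBlocks (0 : Matrix (Fin k) (Fin k) ℂ) 0 0 Cs) s t * w (e t))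
      (fun x => (Matrix.fromBlocks (0 : Matrix (Fin k) (Fin k) ℂ) 0 0 Cs) s (e.symm x) * w x)
      (fun t => by simp)
  have hCsy : Cs.mulVec (fun u => w (e (Sum.inr u))) = 0 := by
    funext u
    have := hBw' (Sum.inr u)
    rw [Fintype.sum_sum_type] at this
    simpa [Matrix.mulVec, dotProduct] using this
  have hy0 : ∀ u, w (e (Sum.inr u)) = 0 := fun u => congrFun (sectorial_inj hCs hCsy) u
  -- Bᴴ *ᵥ w = 0
  have hBHw : Bᴴ.mulVec w = 0 := by
    funext i
    simp only [Matrix.mulVec, dotProduct, hB, Matrix.conjTranspose_apply, Matrix.reindex_apply,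
      Matrix.submatrix_apply, Pi.zero_apply]
    rw [← Fintype.sum_equiv e
      (fun t => star ((Matrix.fromBlocks (0 : Matrix (Fin k) (Fin k) ℂ) 0 0 Cs) t (e.symm i)) * w (e t))
      (fun x => star ((Matrix.fromBlocks (0 : Matrix (Fin k) (Fin k) ℂ) 0 0 Cs) (e.symm x) (e.symm i)) * w x)
      (fun t => by simp)]
    rw [Fintype.sum_sum_type]
    have hinl : ∀ t : Fin k, star ((Matrix.fromBlocks (0 : Matrix (Fin k) (Fin k) ℂ) 0 0 Cs) (Sum.inl t) (e.symm i)) * w (e (Sum.inl t)) = 0 := by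
      intro t
      rcases hsi : e.symm i with s | s <;> simp [hsi]
    have hinr : ∀ t : Fin r, star ((Matrix.fromBlocks (0 : Matrix (Fin k) (Fin k) ℂ) 0 0 Cs) (Sum.inr t) (e.symm i)) * w (e (Sum.inr t)) = 0 := by
      intro t; rw [hy0 t, mul_zero]
    rw [Finset.sum_congr rfl fun t _ => hinl t, Finset.sum_congr rfl fun t _ => hinr t]
    simp
  -- conclude
  have hLH : Lcᴴ.mulVec (fun _ => 1) = 0 := by
    have hLH1 : Lcᴴ = U * (Bᴴ * Uᴴ) := by
      rw [hL]
      simp [Matrix.conjTranspose_mul, Matrix.mul_assoc]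
    rw [hLH1, ← Matrix.mulVec_mulVec, ← Matrix.mulVec_mulVec, ← hw, hBHw]
    simp
  funext i
  have := congrFun hLH i
  simp only [Matrix.mulVec, dotProduct, Matrix.conjTranspose_apply, Matrix.map_apply, hLc,
    mul_one, Pi.zero_apply, RCLike.star_def, Complex.conj_ofReal] at this
  rw [← Complex.ofReal_sum, Complex.ofReal_eq_zero] at this
  simp only [Matrix.vecMul, dotProduct, one_mul, Pi.zero_apply]
  exact this

lemma bal_to_quasi {n : ℕ} (a : Fin n → Fin n → ℝ) (hnn : ∀ i j, 0 ≤ a i j)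
    (hdiag : ∀ i, a i i = 0)
    (hsc : ∀ i j : Fin n, Relation.ReflTransGen (fun u v => 0 < a u v) i j)
    (hbal : ∀ j, ∑ i, a i j = ∑ k, a j k) :
    QuasiSectorial ((lapMat a).map (fun x : ℝ => (x : ℂ))) := by
  cases n with
  | zero =>
    refine ⟨0, 0, Equiv.equivOfIsEmpty _ _, 1, 0, by simp, by simp, ?_, ?_⟩
    · rintro ⟨x, hx1, -⟩
      simp [dotProduct] at hx1
    · ext i
      exact i.elim0
  | succ m =>
    have hNpos : (0:ℝ) < ((m+1 : ℕ) : ℝ) := by positivity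
    set cR : ℝ := (Real.sqrt ((m+1 : ℕ) : ℝ))⁻¹ with hcR
    have hcRpos : 0 < cR := by
      rw [hcR]
      exact inv_pos.mpr (Real.sqrt_pos.mpr hNpos)
    set v : EuclideanSpace ℂ (Fin (m+1)) := WithLp.toLp 2 (fun _ => (cR : ℂ)) with hv
    have hvfam : Orthonormal ℂ (Set.restrict {(0 : Fin (m+1))} (fun _ : Fin (m+1) => v)) := by
      rw [orthonormal_iff_ite]
      rintro ⟨i, hi⟩ ⟨j, hj⟩
      have hij : i = j := by
        simp only [Set.mem_singleton_iff] at hi hj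
        rw [hi, hj]
      subst hij
      have hcc : cR * cR = (((m+1 : ℕ) : ℝ))⁻¹ := by
        rw [hcR, ← mul_inv, Real.mul_self_sqrt hNpos.le]
      have hvv : (inner (𝕜 := ℂ) v v) = (1:ℂ) := by
        have h1 : (inner (𝕜 := ℂ) v v) = ∑ i : Fin (m+1), (starRingEnd ℂ) (v i) * v i := by
          rw [PiLp.inner_apply]
          exact Finset.sum_congr rfl fun i _ => (RCLike.inner_apply _ _).trans (mul_comm _ _)
        rw [h1]
        simp only [hv, PiLp.toLp_apply, Complex.conj_ofReal, ← Complex.ofReal_mul, Finset.sum_const,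
          Finset.card_univ, Fintype.card_fin, nsmul_eq_mul, hcc]
        rw [← Complex.ofReal_natCast, ← Complex.ofReal_mul,
          mul_inv_cancel₀ (ne_of_gt hNpos), Complex.ofReal_one]
      rw [if_pos rfl]; exact hvv
    obtain ⟨b, hb⟩ := hvfam.exists_orthonormalBasis_extension_of_card_eq
      (by simp [finrank_euclideanSpace])
    have hb0 : b 0 = v := hb 0 rfl
    set U : Matrix (Fin (m+1)) (Fin (m+1)) ℂ := Matrix.of (fun i j => b j i) with hU
    have hU1 : Uᴴ * U = 1 := by
      ext j k
      have horth := orthonormal_iff_ite.mp b.orthonormal j k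
      rw [PiLp.inner_apply] at horth
      simp only [Matrix.mul_apply, Matrix.conjTranspose_apply, Matrix.one_apply, hU,
        Matrix.of_apply, RCLike.star_def]
      rw [← horth]
      exact Finset.sum_congr rfl fun i _ => ((RCLike.inner_apply _ _).trans (mul_comm _ _)).symm
    have hU2 : U * Uᴴ = 1 := mul_eq_one_comm.mp hU1
    set Lc : Matrix (Fin (m+1)) (Fin (m+1)) ℂ := (lapMat a).map (fun x : ℝ => (x : ℂ)) with hLcdef
    set M : Matrix (Fin (m+1)) (Fin (m+1)) ℂ := Uᴴ * Lc * U with hM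
    have hM0r : ∀ j, M 0 j = 0 := by
      intro j
      have hrow0 : ∀ p, (Uᴴ * Lc) 0 p = 0 := by
        intro p
        simp only [Matrix.mul_apply, Matrix.conjTranspose_apply, hU, Matrix.of_apply,
          hLcdef, Matrix.map_apply, hb0, hv, PiLp.toLp_apply, RCLike.star_def, Complex.conj_ofReal]
        rw [← Finset.mul_sum, ← Complex.ofReal_sum, lap_col_sum a hdiag hbal p]
        simp
      rw [hM, Matrix.mul_apply]
      exact Finset.sum_eq_zero fun p _ => by rw [hrow0 p, zero_mul]
    have hM0c : ∀ i, M i 0 = 0 := by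
      intro i
      have hcol0 : ∀ q, (Lc * U) q 0 = 0 := by
        intro q
        simp only [Matrix.mul_apply, hU, Matrix.of_apply, hLcdef, Matrix.map_apply,
          hb0, hv, PiLp.toLp_apply]
        rw [← Finset.sum_mul, ← Complex.ofReal_sum, lap_row_sum a hdiag q]
        simp
      rw [hM, Matrix.mul_assoc, Matrix.mul_apply]
      exact Finset.sum_eq_zero fun q _ => by rw [hcol0 q, mul_zero]
    set e : Fin 1 ⊕ Fin m ≃ Fin (m+1) := finSumFinEquiv.trans (finCongr (by omega)) with he
    have h0 : ∀ s : Fin 1, e (Sum.inl s) = (0 : Fin (m+1)) := by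
      intro s
      apply Fin.ext
      simp [he, finSumFinEquiv, Fin.castAdd, Fin.castLE, Fin.fin_one_eq_zero s]
    set Cs : Matrix (Fin m) (Fin m) ℂ :=
      Matrix.of (fun u w => M (e (Sum.inr u)) (e (Sum.inr w))) with hCsdef
    have key : ∀ s t, M (e s) (e t)
        = (Matrix.fromBlocks (0 : Matrix (Fin 1) (Fin 1) ℂ) 0 0 Cs) s t := by
      rintro (s | s) (t | t)
      · rw [h0 s, hM0r]; simp
      · rw [h0 s, hM0r]; simp
      · rw [h0 t, hM0c]; simp
      · simp [hCsdef]
    have hMeq : M = Matrix.reindex e e (Matrix.fromBlocks 0 0 0 Cs) := by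
      ext i j
      rw [Matrix.reindex_apply, Matrix.submatrix_apply, ← key (e.symm i) (e.symm j),
        Equiv.apply_symm_apply, Equiv.apply_symm_apply]
    have hLceq : Lc = U * (Matrix.reindex e e (Matrix.fromBlocks 0 0 0 Cs)) * Uᴴ := by
      rw [← hMeq, hM]
      calc Lc = (U * Uᴴ) * Lc * (U * Uᴴ) := by rw [hU2, Matrix.one_mul, Matrix.mul_one]
        _ = U * (Uᴴ * Lc * U) * Uᴴ := by simp only [Matrix.mul_assoc]
    refine ⟨1, m, e, U, Cs, hU1, hU2, ?_, hLceq⟩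
    -- Sectorial Cs
    rintro ⟨y, hy1, hy0⟩
    set z : Fin (m+1) → ℂ := fun i => Sum.elim (fun _ => (0:ℂ)) y (e.symm i) with hz
    have hze : ∀ s, z (e s) = Sum.elim (fun _ => (0:ℂ)) y s := by
      intro s; rw [hz]; simp
    set x : Fin (m+1) → ℂ := U.mulVec z with hx
    have hUz : ∀ (A : Matrix (Fin (m+1)) (Fin (m+1)) ℂ),
        star x ⬝ᵥ A.mulVec x = star z ⬝ᵥ (Uᴴ * A * U).mulVec z := by
      intro A
      rw [hx, Matrix.star_mulVec, Matrix.mulVec_mulVec, Matrix.dotProduct_mulVec,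
        Matrix.vecMul_vecMul, ← Matrix.dotProduct_mulVec, Matrix.mul_assoc]
    have hxx : star x ⬝ᵥ x = 1 := by
      have h1 : star x ⬝ᵥ x = star z ⬝ᵥ z := by
        rw [hx, Matrix.star_mulVec, Matrix.dotProduct_mulVec, Matrix.vecMul_vecMul, hU1,
          Matrix.vecMul_one]
      have h2 : star z ⬝ᵥ z = star y ⬝ᵥ y := by
        simp only [dotProduct, Pi.star_apply]
        rw [← Fintype.sum_equiv e
          (fun s => star (z (e s)) * z (e s)) (fun i => star (z i) * z i) (fun s => rfl)]
        rw [Fintype.sum_sum_type]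
        simp [hze]
      rw [h1, h2, hy1]
    have hzMz : star z ⬝ᵥ M.mulVec z = star y ⬝ᵥ Cs.mulVec y := by
      have hrow : ∀ s, (M.mulVec z) (e s)
          = ∑ t, (Matrix.fromBlocks (0 : Matrix (Fin 1) (Fin 1) ℂ) 0 0 Cs) s t
              * Sum.elim (fun _ => (0:ℂ)) y t := by
        intro s
        show ∑ j, M (e s) j * z j = _
        rw [← Fintype.sum_equiv e (fun t => M (e s) (e t) * z (e t))
          (fun j => M (e s) j * z j) (fun t => rfl)]
        exact Finset.sum_congr rfl fun t _ => by rw [key, hze]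
      calc star z ⬝ᵥ M.mulVec z = ∑ i, star (z i) * (M.mulVec z) i := by
            simp [dotProduct]
        _ = ∑ s, star (z (e s)) * (M.mulVec z) (e s) :=
            (Fintype.sum_equiv e (fun s => star (z (e s)) * (M.mulVec z) (e s))
              (fun i => star (z i) * (M.mulVec z) i) (fun s => rfl)).symm
        _ = star y ⬝ᵥ Cs.mulVec y := by
            rw [Fintype.sum_sum_type]
            simp only [hze, hrow]
            simp only [Fintype.sum_sum_type, Sum.elim_inl, Sum.elim_inr, star_zero, zero_mul,
              mul_zero, Finset.sum_const_zero, zero_add, Finset.sum_empty]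
            simp [Matrix.fromBlocks_apply₂₁, Matrix.fromBlocks_apply₂₂, hCsdef,
              dotProduct, Matrix.mulVec, RCLike.star_def]
    have hxLx : star x ⬝ᵥ Lc.mulVec x = 0 := by
      rw [hUz Lc, ← hM, hzMz, ← hy0]
    -- from connectivity, x is constant
    have hre0 : (star x ⬝ᵥ Lc.mulVec x).re = 0 := by rw [hxLx]; rfl
    have hsum0 : ∑ i, ∑ j, a i j * Complex.normSq (x i - x j) = 0 := by
      rw [← quad_re a hdiag hbal x, ← hLcdef, hre0, mul_zero]
    have hsum0' : ∑ p ∈ (Finset.univ ×ˢ Finset.univ : Finset (Fin (m+1) × Fin (m+1))),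
        a p.1 p.2 * Complex.normSq (x p.1 - x p.2) = 0 := by
      rw [Finset.sum_product]; exact hsum0
    have hterm : ∀ i j, 0 < a i j → x i = x j := by
      intro i j hij
      have hmem : ((i, j) : Fin (m+1) × Fin (m+1)) ∈ (Finset.univ ×ˢ Finset.univ : Finset (Fin (m+1) × Fin (m+1))) := by simp
      have h0' := (Finset.sum_eq_zero_iff_of_nonneg (fun p _ =>
        mul_nonneg (hnn p.1 p.2) (Complex.normSq_nonneg _))).mp hsum0' (i, j) hmem
      have hns : Complex.normSq (x i - x j) = 0 := by
        rcases mul_eq_zero.mp h0' with h | h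
        · exact absurd h (ne_of_gt hij)
        · exact h
      exact sub_eq_zero.mp (Complex.normSq_eq_zero.mp hns)
    have hconst : ∀ i j : Fin (m+1), x i = x j := by
      intro i j
      induction hsc i j with
      | refl => rfl
      | tail hst hedge ih => exact ih.trans (hterm _ _ hedge)
    -- contradiction with z 0 = 0
    have hz0 : z 0 = 0 := by
      rw [hz]
      have hsymm : e.symm (0 : Fin (m+1)) = Sum.inl 0 := by
        rw [Equiv.symm_apply_eq]
        exact (h0 0).symm
      simp [hsymm]
    have hzUx : z = Uᴴ.mulVec x := by
      rw [hx, Matrix.mulVec_mulVec, hU1, Matrix.one_mulVec]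
    have hx00 : x 0 = 0 := by
      have h1 : (0:ℂ) = ∑ q, star (U q 0) * x q := by
        rw [← hz0, hzUx]
        simp [Matrix.mulVec, dotProduct, Matrix.conjTranspose_apply]
      have h2 : ∀ q, star (U q 0) * x q = (cR : ℂ) * x 0 := by
        intro q
        rw [hconst q 0]
        congr 1
        rw [hU]
        show star (b 0 q) = (cR : ℂ)
        rw [hb0, hv]
        exact Complex.conj_ofReal _
      rw [Finset.sum_congr rfl fun q _ => h2 q, Finset.sum_const, Finset.card_univ,
        Fintype.card_fin, nsmul_eq_mul] at h1
      have hne1 : ((m+1 : ℕ) : ℂ) ≠ 0 := Nat.cast_ne_zero.mpr (Nat.succ_ne_zero m)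
      have hne2 : (cR : ℂ) ≠ 0 := Complex.ofReal_ne_zero.mpr (ne_of_gt hcRpos)
      rcases mul_eq_zero.mp h1.symm with h | h
      · exact absurd h hne1
      · rcases mul_eq_zero.mp h with h' | h'
        · exact absurd h' hne2
        · exact h'
    have : star x ⬝ᵥ x = 0 := by
      simp only [dotProduct, Pi.star_apply]
      refine Finset.sum_eq_zero fun i _ => ?_
      rw [hconst i 0, hx00]
      simp
    rw [hxx] at this
    exact one_ne_zero this

/-- for the Laplacian `L` of a strongly connected weighted digraph, the
following are equivalent: `L` is quasi-sectorial; `L` is semi-sectorial; the graph is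
weight-balanced (`L𝟙 = 0` and `𝟙ᵀL = 0`). -/
theorem laplacian_sectorial_iff_balanced {n : ℕ} (a : Fin n → Fin n → ℝ)
    (hnn : ∀ i j, 0 ≤ a i j) (hdiag : ∀ i, a i i = 0)
    (hsc : ∀ i j : Fin n, Relation.ReflTransGen (fun u v => 0 < a u v) i j) :
    (QuasiSectorial ((lapMat a).map (fun x : ℝ => (x : ℂ))) ↔
      SemiSectorial ((lapMat a).map (fun x : ℝ => (x : ℂ)))) ∧
    (SemiSectorial ((lapMat a).map (fun x : ℝ => (x : ℂ))) ↔
      ((lapMat a).mulVec (fun _ => 1) = 0 ∧ Matrix.vecMul (fun _ => 1) (lapMat a) = 0)) := by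
  constructor
  · constructor
    · intro hQ
      exact bal_to_semi a hnn hdiag ((bal_iff_vecMul a hdiag).mp (quasi_to_bal a hdiag hQ))
    · intro hS
      exact bal_to_quasi a hnn hdiag hsc ((bal_iff_vecMul a hdiag).mp (semi_to_bal a hdiag hS))
  · constructor
    · intro hS
      exact ⟨lap_mulVec_one a hdiag, semi_to_bal a hdiag hS⟩
    · rintro ⟨-, hb⟩
      exact bal_to_semi a hnn hdiag ((bal_iff_vecMul a hdiag).mp hb)

end
end

section
/- Let C be an irreducible nonnegative matrix with numerical radius w(C) and spectral radius ρ(C). The following are equivalent: (1) w(C) is a sharp point of the numerical range W(C); (2) w(C) = ρ(C); (3) C has a common left and right Perron eigenvector. -/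
open Matrix Complex Real

noncomputable section

namespace SharpPt

variable {n : ℕ}

/-- coercion of a real vector to a complex vector -/
def cv {n : ℕ} (u : Fin n → ℝ) : Fin n → ℂ := fun i => (u i : ℂ)

lemma star_cv (u : Fin n → ℝ) : star (cv u) = cv u := by
  funext i; simp [cv]

lemma cv_dot (u v : Fin n → ℝ) : cv u ⬝ᵥ cv v = ((u ⬝ᵥ v : ℝ) : ℂ) := by
  simp [cv, dotProduct]

lemma cv_mulVec (C : Matrix (Fin n) (Fin n) ℝ) (u : Fin n → ℝ) :
    (C.map (fun x : ℝ => (x:ℂ))) *ᵥ cv u = cv (C *ᵥ u) := by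
  funext k; simp [cv, Matrix.mulVec, dotProduct, Matrix.map_apply]

lemma cv_eq_zero {u : Fin n → ℝ} : cv u = 0 ↔ u = 0 := by
  constructor
  · intro h; funext i; have := congrFun h i; simpa [cv] using this
  · rintro rfl; funext i; simp [cv]

lemma cv_smul (a : ℝ) (u : Fin n → ℝ) : cv (a • u) = (a:ℂ) • cv u := by
  funext i; simp [cv]

lemma dot_star_self (x : Fin n → ℂ) :
    star x ⬝ᵥ x = ((∑ i, Complex.normSq (x i) : ℝ) : ℂ) := by
  simp only [dotProduct, Pi.star_apply, RCLike.star_def]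
  push_cast
  congr 1; funext i
  rw [Complex.normSq_eq_conj_mul_self]

lemma dot_star_self_nonneg (x : Fin n → ℂ) : 0 ≤ (∑ i, Complex.normSq (x i) : ℝ) :=
  Finset.sum_nonneg fun i _ => Complex.normSq_nonneg _

lemma dot_star_self_pos {x : Fin n → ℂ} (hx : x ≠ 0) :
    0 < (∑ i, Complex.normSq (x i) : ℝ) := by
  obtain ⟨i, hi⟩ : ∃ i, x i ≠ 0 := by
    by_contra h; push_neg at h; exact hx (funext h)
  exact Finset.sum_pos' (fun j _ => Complex.normSq_nonneg _)
    ⟨i, Finset.mem_univ _, Complex.normSq_pos.mpr hi⟩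

lemma star_smul_dot (a : ℂ) (x : Fin n → ℂ) (y : Fin n → ℂ) :
    star (a • x) ⬝ᵥ y = (starRingEnd ℂ a) * (star x ⬝ᵥ y) := by
  rw [star_smul, smul_dotProduct]; rfl

lemma exists_unit_smul {x : Fin n → ℂ} (hx : x ≠ 0) :
    ∃ r : ℝ, 0 < r ∧ star ((r:ℂ) • x) ⬝ᵥ ((r:ℂ) • x) = 1 := by
  set t : ℝ := ∑ i, Complex.normSq (x i) with ht
  have htpos : 0 < t := dot_star_self_pos hx
  refine ⟨(Real.sqrt t)⁻¹, by positivity, ?_⟩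
  rw [star_smul_dot, dotProduct_smul]
  rw [dot_star_self x, ← ht]
  rw [smul_eq_mul]
  rw [show ((((Real.sqrt t)⁻¹ : ℝ)) : ℂ) = (((Real.sqrt t) : ℝ) : ℂ)⁻¹ by push_cast; ring]
  rw [Complex.conj_inv, Complex.conj_ofReal]
  have hs : ((Real.sqrt t : ℝ) : ℂ) * ((Real.sqrt t : ℝ) : ℂ) = (t : ℂ) := by
    rw [← Complex.ofReal_mul, Real.mul_self_sqrt htpos.le]
  field_simp
  rw [sq, hs]; exact div_self (by exact_mod_cast htpos.ne')

open scoped ComplexOrder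

lemma form_expand (A : Matrix (Fin n) (Fin n) ℂ) (x : Fin n → ℂ) :
    star x ⬝ᵥ A *ᵥ x = ∑ i, ∑ j, (starRingEnd ℂ) (x i) * A i j * x j := by
  simp [dotProduct, Matrix.mulVec, Finset.mul_sum, RCLike.star_def, mul_assoc]

lemma form_conjTranspose (A : Matrix (Fin n) (Fin n) ℂ) (x : Fin n → ℂ) :
    star x ⬝ᵥ Aᴴ *ᵥ x = (starRingEnd ℂ) (star x ⬝ᵥ A *ᵥ x) := by
  rw [form_expand, form_expand, map_sum, Finset.sum_comm]
  refine Finset.sum_congr rfl fun i _ => ?_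
  rw [map_sum]
  refine Finset.sum_congr rfl fun j _ => ?_
  simp only [_root_.map_mul, Matrix.conjTranspose_apply, RCLike.star_def, Complex.conj_conj]
  ring

lemma form_smul (A : Matrix (Fin n) (Fin n) ℂ) (a : ℂ) (x : Fin n → ℂ) :
    star (a • x) ⬝ᵥ A *ᵥ (a • x) = (starRingEnd ℂ) a * a * (star x ⬝ᵥ A *ᵥ x) := by
  rw [Matrix.mulVec_smul, dotProduct_smul, star_smul_dot, smul_eq_mul]; ring

lemma dot_smul_self (a : ℂ) (x : Fin n → ℂ) :
    star (a • x) ⬝ᵥ (a • x) = (starRingEnd ℂ) a * a * (star x ⬝ᵥ x) := by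
  rw [dotProduct_smul, star_smul_dot, smul_eq_mul]; ring

/-- Hermitian forms are real -/
lemma isHermitian_form_real {M : Matrix (Fin n) (Fin n) ℂ} (hM : M.IsHermitian)
    (x : Fin n → ℂ) : (starRingEnd ℂ) (star x ⬝ᵥ M *ᵥ x) = star x ⬝ᵥ M *ᵥ x := by
  have h := form_conjTranspose M x
  rw [hM.eq] at h
  exact h.symm

/-- a maximizer of a Hermitian Rayleigh quotient is an eigenvector -/
lemma rayleigh_eigen {M : Matrix (Fin n) (Fin n) ℂ} (hM : M.IsHermitian) {μ : ℝ}
    (hmax : ∀ x : Fin n → ℂ, star x ⬝ᵥ x = 1 → (star x ⬝ᵥ M *ᵥ x).re ≤ μ)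
    {y : Fin n → ℂ} (hy : star y ⬝ᵥ y = 1) (hval : star y ⬝ᵥ M *ᵥ y = (μ:ℂ)) :
    M *ᵥ y = (μ:ℂ) • y := by
  set N : Matrix (Fin n) (Fin n) ℂ := (μ:ℂ) • (1 : Matrix (Fin n) (Fin n) ℂ) - M with hN
  have hNmul : ∀ x, N *ᵥ x = (μ:ℂ) • x - M *ᵥ x := by
    intro x
    rw [hN, Matrix.sub_mulVec, Matrix.smul_mulVec, Matrix.one_mulVec]
  have hNform : ∀ x : Fin n → ℂ, star x ⬝ᵥ N *ᵥ x = (μ:ℂ) * (star x ⬝ᵥ x) - star x ⬝ᵥ M *ᵥ x := by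
    intro x
    rw [hNmul, dotProduct_sub, dotProduct_smul, smul_eq_mul]
  have hNherm : N.IsHermitian := by
    unfold Matrix.IsHermitian
    rw [hN, Matrix.conjTranspose_sub, Matrix.conjTranspose_smul, Matrix.conjTranspose_one,
      hM.eq, RCLike.star_def, Complex.conj_ofReal]
  have hNpsd : N.PosSemidef := by
    refine Matrix.PosSemidef.of_dotProduct_mulVec_nonneg hNherm fun x => ?_
    rw [Complex.le_def]
    constructor
    · simp only [Complex.zero_re]
      rcases eq_or_ne x 0 with rfl | hx
      · simp [hNform]
      · obtain ⟨r, hr, hunit⟩ := exists_unit_smul hx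
        have h1 : (star ((r:ℂ) • x) ⬝ᵥ M *ᵥ ((r:ℂ) • x)).re ≤ μ := hmax _ hunit
        rw [form_smul, Complex.conj_ofReal, ← Complex.ofReal_mul] at h1
        rw [Complex.re_ofReal_mul] at h1
        have h2 : (r * r) * (star x ⬝ᵥ x).re = 1 := by
          rw [dot_smul_self, Complex.conj_ofReal, ← Complex.ofReal_mul] at hunit
          have := congrArg Complex.re hunit
          rwa [Complex.re_ofReal_mul, Complex.one_re] at this
        rw [hNform]
        have hT : 0 ≤ (star x ⬝ᵥ x).re := by
          rw [dot_star_self, Complex.ofReal_re]; exact dot_star_self_nonneg x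
        have hre' : ((μ:ℂ) * (star x ⬝ᵥ x)).re = μ * (star x ⬝ᵥ x).re :=
          Complex.re_ofReal_mul _ _
        rw [Complex.sub_re, hre']
        have key : (star x ⬝ᵥ M *ᵥ x).re * (r * r * (star x ⬝ᵥ x).re)
            ≤ μ * (star x ⬝ᵥ x).re := by
          calc (star x ⬝ᵥ M *ᵥ x).re * (r * r * (star x ⬝ᵥ x).re)
              = (r * r * (star x ⬝ᵥ M *ᵥ x).re) * (star x ⬝ᵥ x).re := by ring
            _ ≤ μ * (star x ⬝ᵥ x).re := mul_le_mul_of_nonneg_right h1 hT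
        rw [h2, mul_one] at key
        linarith
    · have h := isHermitian_form_real hNherm x
      have := congrArg Complex.im h
      simp only [Complex.conj_im] at this
      simp only [Complex.zero_im]
      linarith
  have hzero : star y ⬝ᵥ N *ᵥ y = 0 := by
    rw [hNform, hy, hval]; ring
  have := (hNpsd.dotProduct_mulVec_zero_iff y).mp hzero
  rw [hNmul] at this
  have := sub_eq_zero.mp this
  exact this.symm

/-- positivity propagation along the graph of a nonnegative matrix -/
lemma prop_pos {A : Matrix (Fin n) (Fin n) ℝ} (hA : ∀ i j, 0 ≤ A i j)
    {y : Fin n → ℝ} (hy : ∀ i, 0 ≤ y i) {w : ℝ}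
    (hub : ∀ k, (A *ᵥ y) k ≤ w * y k) {i j : Fin n}
    (hpath : Relation.ReflTransGen (fun u v : Fin n => 0 < A v u) j i)
    (hj : 0 < y j) : 0 < y i := by
  induction hpath with
  | refl => exact hj
  | tail hab hbc ih =>
    rename_i b c
    have h1 : A c b * y b ≤ (A *ᵥ y) c := by
      rw [Matrix.mulVec, dotProduct]
      exact Finset.single_le_sum (f := fun t => A c t * y t)
        (fun t _ => mul_nonneg (hA c t) (hy t)) (Finset.mem_univ b)
    have h2 : 0 < A c b * y b := mul_pos hbc ih
    have h3 := hub c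
    by_contra hyc
    push_neg at hyc
    have : y c = 0 := le_antisymm hyc (hy c)
    rw [this, mul_zero] at h3
    linarith

lemma eval_charpoly_matrix (A : Matrix (Fin n) (Fin n) ℂ) (μ : ℂ) :
    A.charpoly.eval μ = (μ • (1 : Matrix (Fin n) (Fin n) ℂ) - A).det := by
  rw [Matrix.charpoly, eval_det, Matrix.matPolyEquiv_charmatrix]
  rw [Polynomial.eval_sub, Polynomial.eval_X, Polynomial.eval_C]
  congr 1
  rw [Matrix.scalar_apply]
  ext i j
  by_cases h : i = j <;> simp [h, Matrix.diagonal, Matrix.one_apply]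

lemma isRoot_charpoly_iff (A : Matrix (Fin n) (Fin n) ℂ) (μ : ℂ) :
    A.charpoly.IsRoot μ ↔ ∃ v, v ≠ 0 ∧ A *ᵥ v = μ • v := by
  rw [Polynomial.IsRoot, eval_charpoly_matrix, ← Matrix.exists_mulVec_eq_zero_iff]
  constructor <;> rintro ⟨v, hv, h⟩ <;> refine ⟨v, hv, ?_⟩
  · rw [Matrix.sub_mulVec, Matrix.smul_mulVec, Matrix.one_mulVec, sub_eq_zero] at h
    exact h.symm
  · rw [Matrix.sub_mulVec, Matrix.smul_mulVec, Matrix.one_mulVec, h, sub_self]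

lemma mem_roots_charpoly_iff (A : Matrix (Fin n) (Fin n) ℂ) (μ : ℂ) :
    μ ∈ A.charpoly.roots ↔ ∃ v, v ≠ 0 ∧ A *ᵥ v = μ • v := by
  rw [Polynomial.mem_roots', isRoot_charpoly_iff]
  exact ⟨fun h => h.2, fun h => ⟨(Matrix.charpoly_monic A).ne_zero, h⟩⟩

lemma roots_charpoly_nonempty (hn : 0 < n) (A : Matrix (Fin n) (Fin n) ℂ) :
    ∃ μ, μ ∈ A.charpoly.roots := by
  obtain ⟨z, hz⟩ := Complex.exists_root (f := A.charpoly) (by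
    rw [Matrix.charpoly_degree_eq_dim]
    simpa using hn)
  exact ⟨z, Polynomial.mem_roots'.mpr ⟨(Matrix.charpoly_monic A).ne_zero, hz⟩⟩

lemma continuous_form (A : Matrix (Fin n) (Fin n) ℂ) :
    Continuous fun x : Fin n → ℂ => star x ⬝ᵥ A *ᵥ x := by
  have : (fun x : Fin n → ℂ => star x ⬝ᵥ A *ᵥ x)
      = fun x => ∑ i, ∑ j, (starRingEnd ℂ) (x i) * A i j * x j := by
    funext x; exact form_expand A x
  rw [this]
  refine continuous_finset_sum _ fun i _ => continuous_finset_sum _ fun j _ => ?_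
  exact ((Complex.continuous_conj.comp (continuous_apply i)).mul continuous_const).mul
    (continuous_apply j)

lemma continuous_dotstar :
    Continuous fun x : Fin n → ℂ => star x ⬝ᵥ x := by
  have : (fun x : Fin n → ℂ => star x ⬝ᵥ x)
      = fun x => ∑ i, (starRingEnd ℂ) (x i) * x i := by
    funext x; rfl
  rw [this]
  refine continuous_finset_sum _ fun i _ => ?_
  exact (Complex.continuous_conj.comp (continuous_apply i)).mul (continuous_apply i)

lemma isCompact_unitSphere : IsCompact {x : Fin n → ℂ | star x ⬝ᵥ x = 1} := by
  apply Metric.isCompact_of_isClosed_isBounded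
  · exact isClosed_eq continuous_dotstar continuous_const
  · rw [Metric.isBounded_iff_subset_closedBall 0]
    refine ⟨1, fun x hx => ?_⟩
    simp only [Set.mem_setOf_eq] at hx
    rw [Metric.mem_closedBall, dist_zero_right]
    have hsum : (∑ i, Complex.normSq (x i) : ℝ) = 1 := by
      have := hx; rw [dot_star_self] at this
      exact_mod_cast this
    rw [pi_norm_le_iff_of_nonneg zero_le_one]
    intro i
    have h1 : Complex.normSq (x i) ≤ 1 := by
      rw [← hsum]
      exact Finset.single_le_sum (fun t _ => Complex.normSq_nonneg (x t)) (Finset.mem_univ i)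
    have h2 : ‖x i‖ ^ 2 = Complex.normSq (x i) := by
      rw [Complex.sq_norm]
    nlinarith [norm_nonneg (x i)]

lemma numRange_eq_image (A : Matrix (Fin n) (Fin n) ℂ) :
    numRange A = (fun x : Fin n → ℂ => star x ⬝ᵥ A *ᵥ x) '' {x | star x ⬝ᵥ x = 1} := by
  ext z
  constructor
  · rintro ⟨x, hx, rfl⟩; exact ⟨x, hx, rfl⟩
  · rintro ⟨x, hx, rfl⟩; exact ⟨x, hx, rfl⟩

lemma numRange_nonempty (hn : 0 < n) (A : Matrix (Fin n) (Fin n) ℂ) :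
    (numRange A).Nonempty := by
  let i0 : Fin n := ⟨0, hn⟩
  refine ⟨_, (Pi.single i0 1 : Fin n → ℂ), ?_, rfl⟩
  rw [dot_star_self]
  have h : (∑ i, Complex.normSq ((Pi.single i0 1 : Fin n → ℂ) i) : ℝ) = 1 := by
    rw [Finset.sum_eq_single i0]
    · simp
    · intro b _ hb; rw [Pi.single_eq_of_ne hb]; simp
    · intro h; exact absurd (Finset.mem_univ i0) h
  rw [h]; norm_num

lemma isGreatest_w (hn : 0 < n) (A : Matrix (Fin n) (Fin n) ℂ) :
    IsGreatest ((fun z : ℂ => ‖z‖) '' numRange A) (sSup ((fun z : ℂ => ‖z‖) '' numRange A)) := by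
  have hcomp : IsCompact ((fun z : ℂ => ‖z‖) '' numRange A) := by
    rw [numRange_eq_image]
    rw [← Set.image_comp]
    exact (isCompact_unitSphere.image (continuous_norm.comp (continuous_form A)))
  have hne : ((fun z : ℂ => ‖z‖) '' numRange A).Nonempty :=
    (numRange_nonempty hn A).image _
  obtain ⟨m, hm⟩ := hcomp.exists_isGreatest hne
  rwa [hm.csSup_eq]

section Nonneg

variable {C : Matrix (Fin n) (Fin n) ℝ}

lemma conjTranspose_map_real (C : Matrix (Fin n) (Fin n) ℝ) :
    (C.map (fun x : ℝ => (x:ℂ)))ᴴ = Cᵀ.map (fun x : ℝ => (x:ℂ)) := by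
  ext i j
  simp [Matrix.conjTranspose_apply, Matrix.map_apply, Complex.conj_ofReal]

lemma cv_inj {u v : Fin n → ℝ} (h : cv u = cv v) : u = v := by
  funext i
  have h2 := congrFun h i
  simp only [cv] at h2
  exact_mod_cast h2

lemma real_form_expand (C : Matrix (Fin n) (Fin n) ℝ) (u : Fin n → ℝ) :
    u ⬝ᵥ C *ᵥ u = ∑ i, ∑ j, C i j * u i * u j := by
  simp only [dotProduct, Matrix.mulVec, Finset.mul_sum]
  exact Finset.sum_congr rfl fun i _ => Finset.sum_congr rfl fun j _ => by ring

lemma abs_form_le (hnn : ∀ i j, 0 ≤ C i j) (x : Fin n → ℂ) :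
    ‖star x ⬝ᵥ (C.map (fun x : ℝ => (x:ℂ))) *ᵥ x‖
      ≤ ∑ i, ∑ j, C i j * ‖x i‖ * ‖x j‖ := by
  rw [form_expand]
  calc ‖∑ i, ∑ j, (starRingEnd ℂ) (x i) * (C.map (fun x : ℝ => (x:ℂ))) i j * x j‖
      ≤ ∑ i, ‖∑ j, (starRingEnd ℂ) (x i) * (C.map (fun x : ℝ => (x:ℂ))) i j * x j‖ :=
        norm_sum_le _ _
    _ ≤ ∑ i, ∑ j, ‖(starRingEnd ℂ) (x i) * (C.map (fun x : ℝ => (x:ℂ))) i j * x j‖ :=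
        Finset.sum_le_sum fun i _ => norm_sum_le _ _
    _ = ∑ i, ∑ j, C i j * ‖x i‖ * ‖x j‖ := by
        refine Finset.sum_congr rfl fun i _ => Finset.sum_congr rfl fun j _ => ?_
        rw [norm_mul, norm_mul, Complex.norm_conj, Matrix.map_apply,
          Complex.norm_real, Real.norm_eq_abs, _root_.abs_of_nonneg (hnn i j)]
        ring

lemma form_cv (C : Matrix (Fin n) (Fin n) ℝ) (u : Fin n → ℝ) :
    star (cv u) ⬝ᵥ (C.map (fun x : ℝ => (x:ℂ))) *ᵥ (cv u) = ((u ⬝ᵥ C *ᵥ u : ℝ) : ℂ) := by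
  rw [star_cv, cv_mulVec, cv_dot]

lemma unit_cv {y : Fin n → ℝ} (h : y ⬝ᵥ y = 1) : star (cv y) ⬝ᵥ (cv y) = 1 := by
  rw [star_cv, cv_dot, h, Complex.ofReal_one]

variable {w : ℝ}

lemma w_nonneg (hw : IsGreatest ((fun z : ℂ => ‖z‖) '' numRange (C.map (fun x : ℝ => (x:ℂ)))) w) :
    0 ≤ w := by
  obtain ⟨z, _, rfl⟩ := hw.1
  exact norm_nonneg z

/-- the numerical radius of a nonnegative matrix is attained on a nonnegative real vector -/
lemma exists_nonneg_max (hnn : ∀ i j, 0 ≤ C i j)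
    (hw : IsGreatest ((fun z : ℂ => ‖z‖) '' numRange (C.map (fun x : ℝ => (x:ℂ)))) w) :
    ∃ y : Fin n → ℝ, (∀ i, 0 ≤ y i) ∧ y ⬝ᵥ y = 1 ∧ y ⬝ᵥ C *ᵥ y = w := by
  obtain ⟨z, ⟨x, hx, rfl⟩, habs⟩ := hw.1
  set y : Fin n → ℝ := fun i => ‖x i‖ with hy
  have hynn : ∀ i, 0 ≤ y i := fun i => norm_nonneg _
  have hyy : y ⬝ᵥ y = 1 := by
    have h1 : star x ⬝ᵥ x = ((∑ i, Complex.normSq (x i) : ℝ) : ℂ) := dot_star_self x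
    rw [hx] at h1
    have h2 : (∑ i, Complex.normSq (x i) : ℝ) = 1 := by exact_mod_cast h1.symm
    rw [dotProduct]
    rw [← h2]
    refine Finset.sum_congr rfl fun i _ => ?_
    rw [hy]
    simp [← Complex.sq_norm, sq]
  set Q := y ⬝ᵥ C *ᵥ y with hQ
  have hQW : ((Q:ℝ):ℂ) ∈ numRange (C.map (fun x : ℝ => (x:ℂ))) :=
    ⟨cv y, unit_cv hyy, (form_cv C y).symm⟩
  have hQnn : 0 ≤ Q := by
    rw [hQ, real_form_expand]
    exact Finset.sum_nonneg fun i _ => Finset.sum_nonneg fun j _ =>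
      mul_nonneg (mul_nonneg (hnn i j) (hynn i)) (hynn j)
  have hQle : Q ≤ w := by
    have : ‖((Q:ℝ):ℂ)‖ ≤ w := hw.2 ⟨_, hQW, rfl⟩
    rwa [Complex.norm_real, Real.norm_eq_abs, _root_.abs_of_nonneg hQnn] at this
  have hQge : w ≤ Q := by
    rw [← habs]
    calc ‖star x ⬝ᵥ (C.map (fun x : ℝ => (x:ℂ))) *ᵥ x‖
        ≤ ∑ i, ∑ j, C i j * ‖x i‖ * ‖x j‖ := abs_form_le hnn x
      _ = Q := by rw [hQ, real_form_expand]
  exact ⟨y, hynn, hyy, le_antisymm hQle hQge⟩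

/-- scaled numerical radius bound -/
lemma abs_form_le_w (hw : IsGreatest ((fun z : ℂ => ‖z‖) '' numRange (C.map (fun x : ℝ => (x:ℂ)))) w)
    (x : Fin n → ℂ) :
    ‖star x ⬝ᵥ (C.map (fun x : ℝ => (x:ℂ))) *ᵥ x‖ ≤ w * (star x ⬝ᵥ x).re := by
  rcases eq_or_ne x 0 with rfl | hx
  · simp
  · obtain ⟨r, hr, hunit⟩ := exists_unit_smul hx
    have h1 : ‖star ((r:ℂ) • x) ⬝ᵥ (C.map (fun x : ℝ => (x:ℂ))) *ᵥ ((r:ℂ) • x)‖ ≤ w :=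
      hw.2 ⟨_, ⟨_, hunit, rfl⟩, rfl⟩
    rw [form_smul, Complex.conj_ofReal, ← Complex.ofReal_mul, norm_mul,
      Complex.norm_real, Real.norm_eq_abs, _root_.abs_of_pos (mul_pos hr hr)] at h1
    have h2 : (r * r) * (star x ⬝ᵥ x).re = 1 := by
      rw [dot_smul_self, Complex.conj_ofReal, ← Complex.ofReal_mul] at hunit
      have := congrArg Complex.re hunit
      rwa [Complex.re_ofReal_mul, Complex.one_re] at this
    have hT : 0 ≤ (star x ⬝ᵥ x).re := by
      rw [dot_star_self, Complex.ofReal_re]; exact dot_star_self_nonneg x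
    have key : (r * r * ‖star x ⬝ᵥ (C.map (fun x : ℝ => (x:ℂ))) *ᵥ x‖) * (star x ⬝ᵥ x).re
        ≤ w * (star x ⬝ᵥ x).re := mul_le_mul_of_nonneg_right h1 hT
    calc ‖star x ⬝ᵥ (C.map (fun x : ℝ => (x:ℂ))) *ᵥ x‖
        = (r * r * ‖star x ⬝ᵥ (C.map (fun x : ℝ => (x:ℂ))) *ᵥ x‖) * (star x ⬝ᵥ x).re := by
          rw [show (r * r * ‖star x ⬝ᵥ (C.map (fun x : ℝ => (x:ℂ))) *ᵥ x‖) * (star x ⬝ᵥ x).re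
            = ‖star x ⬝ᵥ (C.map (fun x : ℝ => (x:ℂ))) *ᵥ x‖ * (r * r * (star x ⬝ᵥ x).re) by ring,
            h2, mul_one]
      _ ≤ w * (star x ⬝ᵥ x).re := key

lemma re_form_le_w (hw : IsGreatest ((fun z : ℂ => ‖z‖) '' numRange (C.map (fun x : ℝ => (x:ℂ)))) w)
    (x : Fin n → ℂ) :
    (star x ⬝ᵥ (C.map (fun x : ℝ => (x:ℂ))) *ᵥ x).re ≤ w * (star x ⬝ᵥ x).re :=
  le_trans (Complex.re_le_norm _) (abs_form_le_w hw x)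

/-- a nonnegative real maximizer of the form is an eigenvector of the symmetrized matrix -/
lemma symm_eigen_of_max (hw : IsGreatest ((fun z : ℂ => ‖z‖) '' numRange (C.map (fun x : ℝ => (x:ℂ)))) w)
    {y : Fin n → ℝ} (hyy : y ⬝ᵥ y = 1) (hyC : y ⬝ᵥ C *ᵥ y = w) :
    C *ᵥ y + Cᵀ *ᵥ y = (2 * w) • y := by
  set Cc := C.map (fun x : ℝ => (x:ℂ)) with hCc
  set M : Matrix (Fin n) (Fin n) ℂ := Cc + Ccᴴ with hM
  have hMherm : M.IsHermitian := by
    unfold Matrix.IsHermitian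
    rw [hM, Matrix.conjTranspose_add, Matrix.conjTranspose_conjTranspose, add_comm]
  have hMform : ∀ x : Fin n → ℂ, star x ⬝ᵥ M *ᵥ x
      = star x ⬝ᵥ Cc *ᵥ x + (starRingEnd ℂ) (star x ⬝ᵥ Cc *ᵥ x) := by
    intro x
    rw [hM, Matrix.add_mulVec, dotProduct_add, form_conjTranspose]
  have hmax : ∀ x : Fin n → ℂ, star x ⬝ᵥ x = 1 → (star x ⬝ᵥ M *ᵥ x).re ≤ 2 * w := by
    intro x hx
    rw [hMform, Complex.add_re, Complex.conj_re]
    have h1 : (star x ⬝ᵥ Cc *ᵥ x).re ≤ w := by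
      have := re_form_le_w hw x
      rw [hx] at this
      simpa using this
    linarith
  have hval : star (cv y) ⬝ᵥ M *ᵥ (cv y) = ((2 * w : ℝ) : ℂ) := by
    rw [hMform, hCc, form_cv, hyC, Complex.conj_ofReal]
    push_cast
    ring
  have heig := rayleigh_eigen hMherm hmax (unit_cv hyy) hval
  have hsplit : M *ᵥ (cv y) = cv (C *ᵥ y + Cᵀ *ᵥ y) := by
    rw [hM, Matrix.add_mulVec, hCc, conjTranspose_map_real, cv_mulVec, cv_mulVec]
    funext k
    simp [cv]
  rw [hsplit] at heig
  have : cv (C *ᵥ y + Cᵀ *ᵥ y) = cv ((2 * w) • y) := by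
    rw [heig, cv_smul]
  exact cv_inj this

lemma eig_abs_le_w (hw : IsGreatest ((fun z : ℂ => ‖z‖) '' numRange (C.map (fun x : ℝ => (x:ℂ)))) w)
    {μ : ℂ} {v : Fin n → ℂ} (hv : v ≠ 0)
    (heig : (C.map (fun x : ℝ => (x:ℂ))) *ᵥ v = μ • v) : ‖μ‖ ≤ w := by
  obtain ⟨r, hr, hunit⟩ := exists_unit_smul hv
  have heig' : (C.map (fun x : ℝ => (x:ℂ))) *ᵥ ((r:ℂ) • v) = μ • ((r:ℂ) • v) := by
    rw [Matrix.mulVec_smul, heig, smul_comm]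
  have hform : star ((r:ℂ) • v) ⬝ᵥ (C.map (fun x : ℝ => (x:ℂ))) *ᵥ ((r:ℂ) • v) = μ := by
    rw [heig', dotProduct_smul, hunit, smul_eq_mul, mul_one]
  have : μ ∈ numRange (C.map (fun x : ℝ => (x:ℂ))) := ⟨_, hunit, hform.symm⟩
  exact hw.2 ⟨μ, this, rfl⟩

end Nonneg

section Rho

variable {C : Matrix (Fin n) (Fin n) ℝ} {w : ℝ}

/-- the set of absolute values of eigenvalues -/
def Rset (C : Matrix (Fin n) (Fin n) ℝ) : Set ℝ :=
  {x : ℝ | ∃ z ∈ (C.map (fun x : ℝ => (x:ℂ))).charpoly.roots, x = ‖z‖}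

lemma Rset_finite (C : Matrix (Fin n) (Fin n) ℝ) : (Rset C).Finite := by
  have : Rset C = (fun z => ‖z‖) ''
      {z | z ∈ (C.map (fun x : ℝ => (x:ℂ))).charpoly.roots} := by
    ext x
    constructor
    · rintro ⟨z, hz, rfl⟩; exact ⟨z, hz, rfl⟩
    · rintro ⟨z, hz, rfl⟩; exact ⟨z, hz, rfl⟩
  rw [this]
  exact Set.Finite.image _ (Multiset.finite_toSet _)

lemma Rset_nonempty (hn : 0 < n) (C : Matrix (Fin n) (Fin n) ℝ) : (Rset C).Nonempty := by
  obtain ⟨μ, hμ⟩ := roots_charpoly_nonempty hn (C.map (fun x : ℝ => (x:ℂ)))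
  exact ⟨‖μ‖, μ, hμ, rfl⟩

lemma rho_mem (hn : 0 < n) (C : Matrix (Fin n) (Fin n) ℝ) : sSup (Rset C) ∈ Rset C :=
  (Rset_nonempty hn C).csSup_mem (Rset_finite C)

lemma le_rho {x : ℝ} (hx : x ∈ Rset C) : x ≤ sSup (Rset C) :=
  le_csSup (Rset_finite C).bddAbove hx

lemma rho_le_w (hn : 0 < n)
    (hw : IsGreatest ((fun z : ℂ => ‖z‖) '' numRange (C.map (fun x : ℝ => (x:ℂ)))) w) :
    sSup (Rset C) ≤ w := by
  refine csSup_le (Rset_nonempty hn C) ?_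
  rintro x ⟨z, hz, rfl⟩
  obtain ⟨v, hv, heig⟩ := (mem_roots_charpoly_iff _ _).mp hz
  exact eig_abs_le_w hw hv heig

end Rho

section Implications

variable {C : Matrix (Fin n) (Fin n) ℝ} {w : ℝ}

/-- the key rotated Rayleigh argument -/
lemma rotated_eigen (hw : IsGreatest ((fun z : ℂ => ‖z‖) '' numRange (C.map (fun x : ℝ => (x:ℂ)))) w)
    (η : ℂ)
    (hη : ∀ z ∈ numRange (C.map (fun x : ℝ => (x:ℂ))), (η * z).re ≤ (η * (w:ℂ)).re)
    {y : Fin n → ℝ} (hyy : y ⬝ᵥ y = 1) (hyC : y ⬝ᵥ C *ᵥ y = w) :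
    η • ((C.map (fun x : ℝ => (x:ℂ))) *ᵥ cv y)
      + (starRingEnd ℂ) η • ((C.map (fun x : ℝ => (x:ℂ)))ᴴ *ᵥ cv y)
      = ((2 * (η * (w:ℂ)).re : ℝ) : ℂ) • cv y := by
  set Cc := C.map (fun x : ℝ => (x:ℂ)) with hCc
  set M : Matrix (Fin n) (Fin n) ℂ := η • Cc + (starRingEnd ℂ) η • Ccᴴ with hM
  have hMherm : M.IsHermitian := by
    unfold Matrix.IsHermitian
    rw [hM, Matrix.conjTranspose_add, Matrix.conjTranspose_smul, Matrix.conjTranspose_smul,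
      Matrix.conjTranspose_conjTranspose]
    simp only [RCLike.star_def, Complex.conj_conj]
    exact add_comm _ _
  have hMform : ∀ x : Fin n → ℂ, star x ⬝ᵥ M *ᵥ x
      = η * (star x ⬝ᵥ Cc *ᵥ x) + (starRingEnd ℂ) (η * (star x ⬝ᵥ Cc *ᵥ x)) := by
    intro x
    rw [hM, Matrix.add_mulVec, dotProduct_add, Matrix.smul_mulVec,
      Matrix.smul_mulVec, dotProduct_smul, dotProduct_smul, form_conjTranspose,
      smul_eq_mul, smul_eq_mul, _root_.map_mul]
  have hmax : ∀ x : Fin n → ℂ, star x ⬝ᵥ x = 1 → (star x ⬝ᵥ M *ᵥ x).re ≤ 2 * (η * (w:ℂ)).re := by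
    intro x hx
    rw [hMform, Complex.add_re, Complex.conj_re]
    have h1 : (η * (star x ⬝ᵥ Cc *ᵥ x)).re ≤ (η * (w:ℂ)).re := hη _ ⟨x, hx, rfl⟩
    linarith
  have hval : star (cv y) ⬝ᵥ M *ᵥ (cv y) = ((2 * (η * (w:ℂ)).re : ℝ) : ℂ) := by
    rw [hMform, hCc, form_cv, hyC]
    rw [Complex.add_conj]
  have heig := rayleigh_eigen hMherm hmax (unit_cv hyy) hval
  rw [hM, Matrix.add_mulVec, Matrix.smul_mulVec, Matrix.smul_mulVec] at heig
  exact heig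

/-- (1) implies (2) -/
lemma imp12 (hn : 0 < n) (hnn : ∀ i j, 0 ≤ C i j)
    (hw : IsGreatest ((fun z : ℂ => ‖z‖) '' numRange (C.map (fun x : ℝ => (x:ℂ)))) w)
    (h1 : ∃ θ c : ℝ, 0 < c ∧ ∀ z ∈ numRange (C.map (fun x : ℝ => (x:ℂ))),
      c * ‖z - (w : ℂ)‖ ≤
        (Complex.exp (-(θ : ℂ) * Complex.I) * (z - (w : ℂ))).re) :
    w = sSup (Rset C) := by
  obtain ⟨θ, c, hc, hcone⟩ := h1
  obtain ⟨y, hynn, hyy, hyC⟩ := exists_nonneg_max hnn hw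
  set Cc := C.map (fun x : ℝ => (x:ℂ)) with hCc
  set e : ℂ := Complex.exp (-(θ : ℂ) * Complex.I) with he
  have hee : (starRingEnd ℂ) e * e = 1 := by
    rw [he, ← Complex.exp_conj, ← Complex.exp_add]
    have : (starRingEnd ℂ) (-(θ:ℂ) * Complex.I) + -(θ:ℂ) * Complex.I = 0 := by
      rw [_root_.map_mul, map_neg, Complex.conj_ofReal, Complex.conj_I]
      ring
    rw [this, Complex.exp_zero]
  have habs_e : ‖e‖ = 1 := by
    rw [he, show -(θ:ℂ) * Complex.I = ((-θ : ℝ) : ℂ) * Complex.I by push_cast; ring]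
    exact Complex.norm_exp_ofReal_mul_I _
  -- the cone condition gives half-plane bounds for suitable rotations
  have key : ∀ γ : ℂ, γ.re = 1 → |γ.im| ≤ c →
      ∀ z ∈ numRange Cc, ((-γ * e) * z).re ≤ ((-γ * e) * (w:ℂ)).re := by
    intro γ hγre hγim z hz
    set u : ℂ := e * (z - (w:ℂ)) with hu
    have h1 : c * ‖u‖ ≤ u.re := by
      rw [hu, norm_mul, habs_e, one_mul]
      exact hcone z hz
    have h2 : |γ.im * u.im| ≤ c * ‖u‖ := by
      rw [abs_mul]
      exact mul_le_mul hγim (Complex.abs_im_le_norm u) (abs_nonneg _) hc.le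
    have hdiff : (-γ * e) * z - (-γ * e) * (w:ℂ) = -(γ * u) := by
      rw [hu]; ring
    have hre : ((-γ * e) * z).re - ((-γ * e) * (w:ℂ)).re = (-(γ * u)).re := by
      rw [← Complex.sub_re, hdiff]
    have : (-(γ * u)).re = -(u.re) + γ.im * u.im := by
      rw [Complex.neg_re, Complex.mul_re, hγre]
      ring
    rw [this] at hre
    have h3 : γ.im * u.im ≤ c * ‖u‖ := le_trans (le_abs_self _) h2
    linarith
  -- two rotations
  set η₁ : ℂ := -1 * e with hη₁
  set η₂ : ℂ := -(1 + (c:ℂ) * Complex.I) * e with hη₂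
  have key1 : ∀ z ∈ numRange Cc, (η₁ * z).re ≤ (η₁ * (w:ℂ)).re := by
    intro z hz
    exact key 1 (by simp) (by simp [hc.le]) z hz
  have key2 : ∀ z ∈ numRange Cc, (η₂ * z).re ≤ (η₂ * (w:ℂ)).re := by
    intro z hz
    refine key (1 + (c:ℂ) * Complex.I) ?_ ?_ z hz
    · simp
    · simp [abs_of_pos hc]
  have e1 := rotated_eigen hw η₁ key1 hyy hyC
  have e2 := rotated_eigen hw η₂ key2 hyy hyC
  set P := Cc *ᵥ cv y with hP
  set Q := Ccᴴ *ᵥ cv y with hQ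
  set m₁ : ℂ := ((2 * (η₁ * (w:ℂ)).re : ℝ) : ℂ) with hm₁
  set m₂ : ℂ := ((2 * (η₂ * (w:ℂ)).re : ℝ) : ℂ) with hm₂
  have comb : (η₁ * (starRingEnd ℂ) η₂ - η₂ * (starRingEnd ℂ) η₁) • P
      = (m₁ * (starRingEnd ℂ) η₂ - m₂ * (starRingEnd ℂ) η₁) • cv y := by
    funext k
    have c1 := congrFun e1 k
    have c2 := congrFun e2 k
    simp only [Pi.add_apply, Pi.smul_apply, smul_eq_mul] at c1 c2 ⊢
    linear_combination (starRingEnd ℂ) η₂ * c1 - (starRingEnd ℂ) η₁ * c2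
  have hd : η₁ * (starRingEnd ℂ) η₂ - η₂ * (starRingEnd ℂ) η₁ = -(2*(c:ℂ))*Complex.I := by
    rw [hη₁, hη₂]
    simp only [map_neg, _root_.map_mul, _root_.map_add, _root_.map_one, Complex.conj_I,
      Complex.conj_ofReal]
    linear_combination (-(2*(c:ℂ))*Complex.I) * hee
  have hdne : (-(2*(c:ℂ))*Complex.I : ℂ) ≠ 0 := by
    simp only [ne_eq, mul_eq_zero, neg_eq_zero, Complex.I_ne_zero, or_false]
    intro hcon
    rcases hcon with h | h
    · norm_num at h
    · exact absurd (by exact_mod_cast h) hc.ne'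
  rw [hd] at comb
  have hPy : P = ((-(2*(c:ℂ))*Complex.I)⁻¹ * (m₁ * (starRingEnd ℂ) η₂ - m₂ * (starRingEnd ℂ) η₁)) • cv y := by
    funext k
    have := congrFun comb k
    simp only [Pi.smul_apply, smul_eq_mul] at this ⊢
    field_simp at this ⊢
    linear_combination (-1) * this
  set s : ℂ := (-(2*(c:ℂ))*Complex.I)⁻¹ * (m₁ * (starRingEnd ℂ) η₂ - m₂ * (starRingEnd ℂ) η₁) with hs
  have hform : star (cv y) ⬝ᵥ P = (w : ℂ) := by
    rw [hP, hCc, form_cv, hyC]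
  have hform2 : star (cv y) ⬝ᵥ (s • cv y) = s := by
    rw [dotProduct_smul, unit_cv hyy, smul_eq_mul, mul_one]
  have hsw : s = (w : ℂ) := by rw [← hform2, ← hPy, hform]
  have heig : Cc *ᵥ cv y = (w:ℂ) • cv y := by rw [← hP, hPy, hsw]
  have hyne : cv y ≠ 0 := by
    intro h
    have := unit_cv hyy
    rw [h] at this
    simp at this
  have hroot : (w:ℂ) ∈ Cc.charpoly.roots := (mem_roots_charpoly_iff _ _).mpr ⟨cv y, hyne, heig⟩
  have hwmem : w ∈ Rset C := ⟨(w:ℂ), hroot, by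
    rw [Complex.norm_real, Real.norm_eq_abs, _root_.abs_of_nonneg (w_nonneg hw)]⟩
  exact le_antisymm (le_rho hwmem) (rho_le_w hn hw)

end Implications

section Imp23

variable {C : Matrix (Fin n) (Fin n) ℝ} {w : ℝ}

lemma unit_abs {x : Fin n → ℂ} (hx : star x ⬝ᵥ x = 1) :
    (fun i => ‖x i‖) ⬝ᵥ (fun i => ‖x i‖) = 1 := by
  have h1 : star x ⬝ᵥ x = ((∑ i, Complex.normSq (x i) : ℝ) : ℂ) := dot_star_self x
  rw [hx] at h1
  have h2 : (∑ i, Complex.normSq (x i) : ℝ) = 1 := by exact_mod_cast h1.symm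
  rw [dotProduct, ← h2]
  refine Finset.sum_congr rfl fun i _ => ?_
  simp [← Complex.sq_norm, sq]

lemma exists_pos_entry {y : Fin n → ℝ} (hynn : ∀ i, 0 ≤ y i) (hyy : y ⬝ᵥ y = 1) :
    ∃ j, 0 < y j := by
  by_contra h
  push_neg at h
  have hy0 : y = 0 := funext fun j => le_antisymm (h j) (hynn j)
  rw [hy0] at hyy
  simp [dotProduct] at hyy

/-- (2) implies (3) -/
lemma imp23 (hn : 0 < n) (hnn : ∀ i j, 0 ≤ C i j)
    (hirr : ∀ i j : Fin n, Relation.ReflTransGen (fun u v => 0 < C u v) i j)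
    (hw : IsGreatest ((fun z : ℂ => ‖z‖) '' numRange (C.map (fun x : ℝ => (x:ℂ)))) w)
    (h2 : w = sSup (Rset C)) :
    ∃ v : Fin n → ℝ, (∀ i, 0 < v i) ∧ C.mulVec v = sSup (Rset C) • v
      ∧ Matrix.vecMul v C = sSup (Rset C) • v := by
  set Cc := C.map (fun x : ℝ => (x:ℂ)) with hCc
  obtain ⟨lam, hlam, habs⟩ := rho_mem hn C
  obtain ⟨x0, hx0ne, heig0⟩ := (mem_roots_charpoly_iff Cc lam).mp hlam
  obtain ⟨r, hr, hunit⟩ := exists_unit_smul hx0ne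
  set x : Fin n → ℂ := (r:ℂ) • x0 with hx
  have heig : Cc *ᵥ x = lam • x := by
    rw [hx, Matrix.mulVec_smul, heig0, smul_comm]
  set y : Fin n → ℝ := fun i => ‖x i‖ with hy
  have hynn : ∀ i, 0 ≤ y i := fun i => norm_nonneg _
  have hyy : y ⬝ᵥ y = 1 := unit_abs hunit
  have hformx : star x ⬝ᵥ Cc *ᵥ x = lam := by
    rw [heig, dotProduct_smul, hunit, smul_eq_mul, mul_one]
  have hQW : ((y ⬝ᵥ C *ᵥ y : ℝ) : ℂ) ∈ numRange Cc := ⟨cv y, unit_cv hyy, (form_cv C y).symm⟩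
  have hQle : y ⬝ᵥ C *ᵥ y ≤ w := by
    have hb := abs_form_le_w hw (cv y)
    rw [← hCc, form_cv, unit_cv hyy] at hb
    simp only [Complex.one_re, mul_one, Complex.norm_real, Real.norm_eq_abs] at hb
    exact le_trans (le_abs_self _) hb
  have hQge : w ≤ y ⬝ᵥ C *ᵥ y := by
    calc w = ‖lam‖ := by rw [h2, habs]
      _ = ‖star x ⬝ᵥ Cc *ᵥ x‖ := by rw [hformx]
      _ ≤ ∑ i, ∑ j, C i j * ‖x i‖ * ‖x j‖ := abs_form_le hnn x
      _ = y ⬝ᵥ C *ᵥ y := (real_form_expand C y).symm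
  have hQ : y ⬝ᵥ C *ᵥ y = w := le_antisymm hQle hQge
  have hsymm := symm_eigen_of_max hw hyy hQ
  have hlow : ∀ k, w * y k ≤ (C *ᵥ y) k := by
    intro k
    have h1 : (Cc *ᵥ x) k = lam * x k := by
      have := congrFun heig k
      simpa using this
    have h2' : ‖(Cc *ᵥ x) k‖ = ‖lam‖ * y k := by
      rw [h1, norm_mul, hy]
    have h3 : ‖(Cc *ᵥ x) k‖ ≤ (C *ᵥ y) k := by
      have hexp : (Cc *ᵥ x) k = ∑ j, ((C k j : ℝ) : ℂ) * x j := by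
        simp [hCc, Matrix.mulVec, dotProduct, Matrix.map_apply]
      rw [hexp]
      calc ‖∑ j, ((C k j : ℝ) : ℂ) * x j‖
          ≤ ∑ j, ‖((C k j : ℝ) : ℂ) * x j‖ := norm_sum_le _ _
        _ = (C *ᵥ y) k := by
            rw [Matrix.mulVec, dotProduct]
            refine Finset.sum_congr rfl fun j _ => ?_
            rw [norm_mul, Complex.norm_real, Real.norm_eq_abs, _root_.abs_of_nonneg (hnn k j), hy]
    have h4 : ‖lam‖ = w := by rw [h2, habs]
    rw [h4] at h2'
    linarith [h2' ▸ h3]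
  have hup : ∀ k, (Cᵀ *ᵥ y) k ≤ w * y k := by
    intro k
    have := congrFun hsymm k
    simp only [Pi.add_apply, Pi.smul_apply, smul_eq_mul] at this
    have := hlow k
    linarith
  have hypos : ∀ i, 0 < y i := by
    intro i
    obtain ⟨j, hj⟩ := exists_pos_entry hynn hyy
    refine prop_pos (fun a b => hnn b a) hynn hup ?_ hj
    exact Relation.ReflTransGen.mono (fun a b hab => by simpa [Matrix.transpose_apply] using hab) _ _ (hirr j i)
  have hzero : ∑ k, y k * ((C *ᵥ y) k - w * y k) = 0 := by
    have hsum : ∑ k, y k * ((C *ᵥ y) k - w * y k)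
        = y ⬝ᵥ (C *ᵥ y) - w * (y ⬝ᵥ y) := by
      calc ∑ k, y k * ((C *ᵥ y) k - w * y k)
          = ∑ k, (y k * (C *ᵥ y) k - w * (y k * y k)) :=
            Finset.sum_congr rfl fun k _ => by ring
        _ = (∑ k, y k * (C *ᵥ y) k) - ∑ k, w * (y k * y k) := Finset.sum_sub_distrib _ _
        _ = y ⬝ᵥ (C *ᵥ y) - w * (y ⬝ᵥ y) := by rw [← Finset.mul_sum]; rfl
    rw [hsum, hQ, hyy]; ring
  have heqk : ∀ k, (C *ᵥ y) k = w * y k := by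
    have hterm := (Finset.sum_eq_zero_iff_of_nonneg
      (fun k _ => mul_nonneg (hynn k) (by linarith [hlow k]))).mp hzero
    intro k
    have hk := hterm k (Finset.mem_univ k)
    rcases mul_eq_zero.mp hk with h | h
    · exact absurd h (hypos k).ne'
    · linarith
  have hCy : C *ᵥ y = w • y := funext fun k => by
    rw [heqk k]; simp
  have hCty : Cᵀ *ᵥ y = w • y := by
    funext k
    have := congrFun hsymm k
    simp only [Pi.add_apply, Pi.smul_apply, smul_eq_mul] at this ⊢
    have := heqk k
    linarith [congrFun hsymm k, heqk k]
  refine ⟨y, hypos, ?_, ?_⟩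
  · rw [← h2]; exact hCy
  · rw [← Matrix.mulVec_transpose, ← h2]; exact hCty

end Imp23

section Imp31

variable {C : Matrix (Fin n) (Fin n) ℝ} {w : ℝ}

lemma dot_self_pos {u : Fin n → ℝ} (hu : u ≠ 0) : 0 < u ⬝ᵥ u := by
  obtain ⟨i, hi⟩ : ∃ i, u i ≠ 0 := by
    by_contra h; push_neg at h; exact hu (funext h)
  exact Finset.sum_pos' (fun j _ => mul_self_nonneg (u j))
    ⟨i, Finset.mem_univ _, mul_self_pos.mpr hi⟩

lemma star_dot_conj (a b : Fin n → ℂ) : star a ⬝ᵥ b = (starRingEnd ℂ) (star b ⬝ᵥ a) := by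
  simp only [dotProduct, Pi.star_apply, RCLike.star_def, map_sum, _root_.map_mul,
    Complex.conj_conj]
  exact Finset.sum_congr rfl fun i _ => by ring

lemma cv_vecMul (C : Matrix (Fin n) (Fin n) ℝ) (u : Fin n → ℝ) :
    (cv u) ᵥ* (C.map (fun x : ℝ => (x:ℂ))) = cv (u ᵥ* C) := by
  funext k; simp [cv, Matrix.vecMul, dotProduct, Matrix.map_apply]

lemma dot_transpose (C : Matrix (Fin n) (Fin n) ℝ) (u : Fin n → ℝ) :
    u ⬝ᵥ Cᵀ *ᵥ u = u ⬝ᵥ C *ᵥ u := by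
  rw [real_form_expand, real_form_expand, Finset.sum_comm]
  refine Finset.sum_congr rfl fun i _ => Finset.sum_congr rfl fun j _ => ?_
  rw [Matrix.transpose_apply]; ring

lemma symmM_herm (C : Matrix (Fin n) (Fin n) ℝ) :
    ((C.map (fun x : ℝ => (x:ℂ))) + (C.map (fun x : ℝ => (x:ℂ)))ᴴ).IsHermitian := by
  unfold Matrix.IsHermitian
  rw [Matrix.conjTranspose_add, Matrix.conjTranspose_conjTranspose, add_comm]

lemma symmM_form (C : Matrix (Fin n) (Fin n) ℝ) (x : Fin n → ℂ) :
    star x ⬝ᵥ ((C.map (fun x : ℝ => (x:ℂ))) + (C.map (fun x : ℝ => (x:ℂ)))ᴴ) *ᵥ x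
      = star x ⬝ᵥ (C.map (fun x : ℝ => (x:ℂ))) *ᵥ x
        + (starRingEnd ℂ) (star x ⬝ᵥ (C.map (fun x : ℝ => (x:ℂ))) *ᵥ x) := by
  rw [Matrix.add_mulVec, dotProduct_add, form_conjTranspose]

lemma symmM_max (hw : IsGreatest ((fun z : ℂ => ‖z‖) '' numRange (C.map (fun x : ℝ => (x:ℂ)))) w)
    {x : Fin n → ℂ} (hx : star x ⬝ᵥ x = 1) :
    (star x ⬝ᵥ ((C.map (fun x : ℝ => (x:ℂ))) + (C.map (fun x : ℝ => (x:ℂ)))ᴴ) *ᵥ x).re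
      ≤ 2 * w := by
  rw [symmM_form, Complex.add_re, Complex.conj_re]
  have h1 := re_form_le_w hw x
  rw [hx] at h1
  simp only [Complex.one_re, mul_one] at h1
  linarith

lemma map_eigen_re_im {S : Matrix (Fin n) (Fin n) ℝ} {y : Fin n → ℂ} {μ : ℝ}
    (h : (S.map (fun x : ℝ => (x:ℂ))) *ᵥ y = ((μ:ℝ):ℂ) • y) :
    S *ᵥ (fun i => (y i).re) = μ • (fun i => (y i).re)
    ∧ S *ᵥ (fun i => (y i).im) = μ • (fun i => (y i).im) := by
  have key : ∀ k, (∑ j, ((S k j : ℝ):ℂ) * y j) = (μ:ℂ) * y k := by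
    intro k
    have hk := congrFun h k
    simpa [Matrix.mulVec, dotProduct, Matrix.map_apply] using hk
  constructor
  · funext k
    have hre := congrArg Complex.re (key k)
    rw [Complex.re_sum] at hre
    simp only [Complex.mul_re, Complex.ofReal_re, Complex.ofReal_im, zero_mul, sub_zero] at hre
    simpa [Matrix.mulVec, dotProduct] using hre
  · funext k
    have him := congrArg Complex.im (key k)
    rw [Complex.im_sum] at him
    simp only [Complex.mul_im, Complex.ofReal_re, Complex.ofReal_im, zero_mul, add_zero] at him
    simpa [Matrix.mulVec, dotProduct] using him

lemma rho_eq_w_of_common (hn : 0 < n) (hnn : ∀ i j, 0 ≤ C i j)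
    (hw : IsGreatest ((fun z : ℂ => ‖z‖) '' numRange (C.map (fun x : ℝ => (x:ℂ)))) w)
    {v : Fin n → ℝ} (hvpos : ∀ i, 0 < v i) {p : ℝ}
    (hCv : C *ᵥ v = p • v) (hvC : v ᵥ* C = p • v) : w = p := by
  have hvne : v ≠ 0 := by
    intro h
    exact absurd (congrFun h ⟨0, hn⟩) (hvpos ⟨0, hn⟩).ne'
  -- p ≤ w
  have hple : p ≤ w := by
    have hcvne : cv v ≠ 0 := fun h => hvne (cv_eq_zero.mp h)
    have heig : (C.map (fun x : ℝ => (x:ℂ))) *ᵥ cv v = ((p:ℝ):ℂ) • cv v := by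
      rw [cv_mulVec, hCv, cv_smul]
    have := eig_abs_le_w hw hcvne heig
    rw [Complex.norm_real, Real.norm_eq_abs] at this
    exact le_trans (le_abs_self p) this
  -- w ≤ p
  obtain ⟨y, hynn, hyy, hyC⟩ := exists_nonneg_max hnn hw
  have hsymm := symm_eigen_of_max hw hyy hyC
  have hd := congrArg (fun u => v ⬝ᵥ u) hsymm
  simp only [dotProduct_add, dotProduct_smul, smul_eq_mul] at hd
  have h1 : v ⬝ᵥ C *ᵥ y = p * (v ⬝ᵥ y) := by
    rw [dotProduct_mulVec, hvC, smul_dotProduct, smul_eq_mul]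
  have h2 : v ⬝ᵥ Cᵀ *ᵥ y = p * (v ⬝ᵥ y) := by
    rw [dotProduct_mulVec, Matrix.vecMul_transpose, hCv, smul_dotProduct, smul_eq_mul]
  rw [h1, h2] at hd
  have hdpos : 0 < v ⬝ᵥ y := by
    obtain ⟨j, hj⟩ := exists_pos_entry hynn hyy
    exact Finset.sum_pos' (fun i _ => mul_nonneg (hvpos i).le (hynn i))
      ⟨j, Finset.mem_univ _, mul_pos (hvpos j) hj⟩
  have : 2 * p * (v ⬝ᵥ y) = 2 * w * (v ⬝ᵥ y) := by linarith
  have := mul_right_cancel₀ hdpos.ne' this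
  linarith

/-- no eigenvector of the symmetrized matrix for eigenvalue `2w` is orthogonal to `v` -/
lemma perp_gap (hnn : ∀ i j, 0 ≤ C i j)
    (hirr : ∀ i j : Fin n, Relation.ReflTransGen (fun u v => 0 < C u v) i j)
    (hw : IsGreatest ((fun z : ℂ => ‖z‖) '' numRange (C.map (fun x : ℝ => (x:ℂ)))) w)
    {v : Fin n → ℝ} (hvpos : ∀ i, 0 < v i)
    {u : Fin n → ℝ} (hu : u ≠ 0) (hperp : v ⬝ᵥ u = 0)
    (heigu : C *ᵥ u + Cᵀ *ᵥ u = (2*w) • u) : False := by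
  set tu := u ⬝ᵥ u with htu
  have htupos : 0 < tu := dot_self_pos hu
  have hformu : u ⬝ᵥ C *ᵥ u = w * tu := by
    have hd := congrArg (fun t => u ⬝ᵥ t) heigu
    simp only [dotProduct_add, dotProduct_smul, smul_eq_mul] at hd
    rw [dot_transpose, ← htu] at hd
    linarith
  set uu : Fin n → ℝ := fun i => |u i| with huu
  have huunn : ∀ i, 0 ≤ uu i := fun i => abs_nonneg _
  have huudot : uu ⬝ᵥ uu = tu := by
    rw [htu, dotProduct, dotProduct]
    exact Finset.sum_congr rfl fun i _ => abs_mul_abs_self (u i)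
  have hle : u ⬝ᵥ C *ᵥ u ≤ uu ⬝ᵥ C *ᵥ uu := by
    rw [real_form_expand, real_form_expand]
    refine Finset.sum_le_sum fun i _ => Finset.sum_le_sum fun j _ => ?_
    calc C i j * u i * u j ≤ |C i j * u i * u j| := le_abs_self _
      _ = C i j * uu i * uu j := by
          rw [abs_mul, abs_mul, _root_.abs_of_nonneg (hnn i j)]
  have hge : uu ⬝ᵥ C *ᵥ uu ≤ w * tu := by
    have hb := re_form_le_w hw (cv uu)
    rw [form_cv, star_cv, cv_dot, huudot, Complex.ofReal_re, Complex.ofReal_re] at hb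
    exact hb
  have huuform : uu ⬝ᵥ C *ᵥ uu = w * tu := le_antisymm hge (by linarith)
  -- normalize
  set r := (Real.sqrt tu)⁻¹ with hr
  have hrpos : 0 < r := by rw [hr]; positivity
  have hrr : r * r * tu = 1 := by
    rw [hr, ← mul_inv]
    rw [Real.mul_self_sqrt htupos.le]
    field_simp
  set yh := r • uu with hyh
  have hyhdot : yh ⬝ᵥ yh = 1 := by
    rw [hyh, smul_dotProduct, dotProduct_smul, huudot, smul_eq_mul, smul_eq_mul, ← mul_assoc, hrr]
  have hyhC : yh ⬝ᵥ C *ᵥ yh = w := by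
    rw [hyh, smul_dotProduct, Matrix.mulVec_smul, dotProduct_smul, huuform, smul_eq_mul,
      smul_eq_mul]
    rw [show r * (r * (w * tu)) = w * (r * r * tu) by ring, hrr, mul_one]
  have hsym2 := symm_eigen_of_max hw hyhdot hyhC
  have hSuu : C *ᵥ uu + Cᵀ *ᵥ uu = (2*w) • uu := by
    funext k
    have hk := congrFun hsym2 k
    rw [hyh, Matrix.mulVec_smul, Matrix.mulVec_smul] at hk
    simp only [Pi.add_apply, Pi.smul_apply, smul_eq_mul] at hk ⊢
    have : r * ((C *ᵥ uu) k + (Cᵀ *ᵥ uu) k) = r * (2 * w * uu k) := by ring_nf; ring_nf at hk; linarith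
    exact mul_left_cancel₀ hrpos.ne' this
  have hubuu : ∀ k, ((C + Cᵀ) *ᵥ uu) k ≤ (2*w) * uu k := by
    intro k
    rw [Matrix.add_mulVec]
    have := congrFun hSuu k
    simp only [Pi.add_apply, Pi.smul_apply, smul_eq_mul] at this ⊢
    linarith
  have hSnn : ∀ i j, 0 ≤ (C + Cᵀ) i j := fun i j => by
    simp only [Matrix.add_apply, Matrix.transpose_apply]
    exact add_nonneg (hnn i j) (hnn j i)
  have hpos_uu : ∀ i, 0 < uu i := by
    intro i
    obtain ⟨i0, hi0⟩ : ∃ i0, u i0 ≠ 0 := by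
      by_contra h; push_neg at h; exact hu (funext h)
    have hstart : 0 < uu i0 := abs_pos.mpr hi0
    refine prop_pos hSnn huunn hubuu ?_ hstart
    refine Relation.ReflTransGen.mono (fun a b hab => ?_) _ _ (hirr i0 i)
    simp only [Matrix.add_apply, Matrix.transpose_apply]
    exact add_pos_of_nonneg_of_pos (hnn b a) hab
  -- u has an entry of each sign
  have hposu : ∃ j, 0 < u j := by
    by_contra h
    push_neg at h
    obtain ⟨i0, hi0⟩ : ∃ i0, u i0 ≠ 0 := by
      by_contra h'; push_neg at h'; exact hu (funext h')
    have : v ⬝ᵥ u < 0 := by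
      rw [dotProduct]
      calc ∑ i, v i * u i < ∑ i, (0:ℝ) := by
            refine Finset.sum_lt_sum (fun i _ => mul_nonpos_of_nonneg_of_nonpos (hvpos i).le (h i))
              ⟨i0, Finset.mem_univ _, mul_neg_of_pos_of_neg (hvpos i0) (lt_of_le_of_ne (h i0) hi0)⟩
        _ = 0 := Finset.sum_const_zero
    rw [hperp] at this
    exact absurd this (lt_irrefl 0)
  have hnegu : ∃ k, u k < 0 := by
    by_contra h
    push_neg at h
    obtain ⟨j, hj⟩ := hposu
    have : 0 < v ⬝ᵥ u := by
      rw [dotProduct]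
      exact Finset.sum_pos' (fun i _ => mul_nonneg (hvpos i).le (h i))
        ⟨j, Finset.mem_univ _, mul_pos (hvpos j) hj⟩
    rw [hperp] at this
    exact absurd this (lt_irrefl 0)
  set up : Fin n → ℝ := (2⁻¹ : ℝ) • (u + uu) with hup
  have hup_eig : ∀ k, ((C + Cᵀ) *ᵥ up) k ≤ (2*w) * up k := by
    intro k
    have : (C + Cᵀ) *ᵥ up = (2⁻¹:ℝ) • ((C + Cᵀ) *ᵥ u + (C + Cᵀ) *ᵥ uu) := by
      rw [hup, Matrix.mulVec_smul, Matrix.mulVec_add]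
    rw [this, hup]
    have h1 := congrFun heigu k
    have h2 := congrFun hSuu k
    simp only [Matrix.add_mulVec, Pi.add_apply, Pi.smul_apply, smul_eq_mul] at h1 h2 ⊢
    linarith
  have hup_nonneg : ∀ i, 0 ≤ up i := by
    intro i
    rw [hup]
    simp only [Pi.smul_apply, Pi.add_apply, smul_eq_mul, huu]
    have := neg_abs_le (u i)
    linarith
  obtain ⟨j, hj⟩ := hposu
  obtain ⟨k, hk⟩ := hnegu
  have hupj : 0 < up j := by
    rw [hup]
    simp only [Pi.smul_apply, Pi.add_apply, smul_eq_mul, huu]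
    have : |u j| = u j := _root_.abs_of_pos hj
    rw [this]; linarith
  have hupk : up k = 0 := by
    rw [hup]
    simp only [Pi.smul_apply, Pi.add_apply, smul_eq_mul, huu]
    rw [abs_of_neg hk]; ring
  have : 0 < up k := by
    refine prop_pos hSnn hup_nonneg hup_eig ?_ hupj
    refine Relation.ReflTransGen.mono (fun a b hab => ?_) _ _ (hirr j k)
    simp only [Matrix.add_apply, Matrix.transpose_apply]
    exact add_pos_of_nonneg_of_pos (hnn b a) hab
  rw [hupk] at this
  exact absurd this (lt_irrefl 0)

end Imp31

section Imp31b

variable {C : Matrix (Fin n) (Fin n) ℝ} {w : ℝ}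

lemma form_add (A : Matrix (Fin n) (Fin n) ℂ) (a b : Fin n → ℂ) :
    star (a + b) ⬝ᵥ A *ᵥ (a + b) = star a ⬝ᵥ A *ᵥ a + star a ⬝ᵥ A *ᵥ b
      + star b ⬝ᵥ A *ᵥ a + star b ⬝ᵥ A *ᵥ b := by
  rw [star_add, Matrix.mulVec_add, add_dotProduct, dotProduct_add, dotProduct_add]
  ring

lemma dot_add_star (a b : Fin n → ℂ) :
    star (a + b) ⬝ᵥ (a + b) = star a ⬝ᵥ a + star a ⬝ᵥ b + star b ⬝ᵥ a + star b ⬝ᵥ b := by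
  rw [star_add, add_dotProduct, dotProduct_add, dotProduct_add]
  ring

lemma gap_lemma (hnn : ∀ i j, 0 ≤ C i j)
    (hirr : ∀ i j : Fin n, Relation.ReflTransGen (fun u v => 0 < C u v) i j)
    (hw : IsGreatest ((fun z : ℂ => ‖z‖) '' numRange (C.map (fun x : ℝ => (x:ℂ)))) w)
    {v : Fin n → ℝ} (hvpos : ∀ i, 0 < v i) (hvv : v ⬝ᵥ v = 1)
    (hCv : C *ᵥ v = w • v) (hvC : v ᵥ* C = w • v) :
    ∃ δ : ℝ, 0 < δ ∧ ∀ y : Fin n → ℂ, star (cv v) ⬝ᵥ y = 0 →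
      (star y ⬝ᵥ (C.map (fun x : ℝ => (x:ℂ))) *ᵥ y).re ≤ (w - δ) * (star y ⬝ᵥ y).re := by
  set Cc := C.map (fun x : ℝ => (x:ℂ)) with hCc
  set M : Matrix (Fin n) (Fin n) ℂ := Cc + Ccᴴ with hM
  set D : Set (Fin n → ℂ) := {y | star y ⬝ᵥ y = 1} ∩ {y | star (cv v) ⬝ᵥ y = 0} with hD
  have hcont2 : Continuous fun y : Fin n → ℂ => star (cv v) ⬝ᵥ y := by
    have hfun : (fun y : Fin n → ℂ => star (cv v) ⬝ᵥ y)
        = fun y => ∑ i, (star (cv v)) i * y i := by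
      funext y; rfl
    rw [hfun]
    exact continuous_finset_sum _ fun i _ => continuous_const.mul (continuous_apply i)
  by_cases hDne : D.Nonempty
  · have hDcomp : IsCompact D :=
      isCompact_unitSphere.inter_right (isClosed_eq hcont2 continuous_const)
    have hgcont : Continuous fun y : Fin n → ℂ => (star y ⬝ᵥ M *ᵥ y).re :=
      Complex.continuous_re.comp (continuous_form M)
    obtain ⟨ys, hysD, hysmax⟩ := hDcomp.exists_isMaxOn hDne hgcont.continuousOn
    set lam2 := (star ys ⬝ᵥ M *ᵥ ys).re with hlam2
    have hysunit : star ys ⬝ᵥ ys = 1 := hysD.1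
    have hysperp : star (cv v) ⬝ᵥ ys = 0 := hysD.2
    have hlam2le : lam2 ≤ 2*w := symmM_max hw hysunit
    have hlam2lt : lam2 < 2*w := by
      rcases lt_or_eq_of_le hlam2le with hlt | heq
      · exact hlt
      exfalso
      have hvalim : (star ys ⬝ᵥ M *ᵥ ys).im = 0 := by
        have hc := isHermitian_form_real (symmM_herm C) ys
        have := congrArg Complex.im hc
        simp only [Complex.conj_im] at this
        linarith
      have hval : star ys ⬝ᵥ M *ᵥ ys = ((2*w : ℝ):ℂ) := by
        apply Complex.ext
        · rw [Complex.ofReal_re]; exact heq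
        · rw [Complex.ofReal_im]; exact hvalim
      have heig := rayleigh_eigen (symmM_herm C) (fun x hx => symmM_max hw hx) hysunit hval
      have hMS : (C.map (fun x : ℝ => (x:ℂ))) + (C.map (fun x : ℝ => (x:ℂ)))ᴴ
          = (C + Cᵀ).map (fun x : ℝ => (x:ℂ)) := by
        rw [conjTranspose_map_real]
        ext i j
        simp [Matrix.map_apply, Matrix.add_apply]
      rw [hMS] at heig
      obtain ⟨hare, haim⟩ := map_eigen_re_im heig
      have hexp0 : star (cv v) ⬝ᵥ ys = ∑ i, ((v i : ℝ):ℂ) * ys i := by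
        rw [star_cv]; rfl
      rw [hexp0] at hysperp
      have hrea : v ⬝ᵥ (fun i => (ys i).re) = 0 := by
        have := congrArg Complex.re hysperp
        rw [Complex.re_sum] at this
        simpa [dotProduct, Complex.mul_re] using this
      have hima : v ⬝ᵥ (fun i => (ys i).im) = 0 := by
        have := congrArg Complex.im hysperp
        rw [Complex.im_sum] at this
        simpa [dotProduct, Complex.mul_im] using this
      have hyne : ys ≠ 0 := by
        intro h
        rw [h] at hysunit
        simp [dotProduct] at hysunit
      have hab : (fun i => (ys i).re) ≠ 0 ∨ (fun i => (ys i).im) ≠ 0 := by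
        by_contra hcon
        push_neg at hcon
        apply hyne
        funext i
        have h1 := congrFun hcon.1 i
        have h2 := congrFun hcon.2 i
        simp only [Pi.zero_apply] at h1 h2
        exact Complex.ext h1 h2
      have hform : ∀ (u : Fin n → ℝ), (C + Cᵀ) *ᵥ u = (2*w) • u →
          C *ᵥ u + Cᵀ *ᵥ u = (2*w) • u := fun u h => by rwa [Matrix.add_mulVec] at h
      rcases hab with h | h
      · exact perp_gap hnn hirr hw hvpos h hrea (hform _ hare)
      · exact perp_gap hnn hirr hw hvpos h hima (hform _ haim)
    refine ⟨w - lam2/2, by linarith, ?_⟩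
    intro y hyperp
    rcases eq_or_ne y 0 with rfl | hy0
    · simp
    · obtain ⟨r2, hr2, hunit2⟩ := exists_unit_smul hy0
      have hperp2 : star (cv v) ⬝ᵥ ((r2:ℂ) • y) = 0 := by
        rw [dotProduct_smul, hyperp, smul_zero]
      have hmem : ((r2:ℂ) • y) ∈ D := ⟨hunit2, hperp2⟩
      have hbound : (star ((r2:ℂ) • y) ⬝ᵥ M *ᵥ ((r2:ℂ) • y)).re ≤ lam2 := hysmax hmem
      have hgval : (star ((r2:ℂ) • y) ⬝ᵥ M *ᵥ ((r2:ℂ) • y)).re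
          = (r2*r2) * (star y ⬝ᵥ M *ᵥ y).re := by
        rw [form_smul, Complex.conj_ofReal, ← Complex.ofReal_mul, Complex.re_ofReal_mul]
      have hMre : (star y ⬝ᵥ M *ᵥ y).re = 2 * (star y ⬝ᵥ Cc *ᵥ y).re := by
        rw [hM, hCc, symmM_form, Complex.add_re, Complex.conj_re]
        ring
      have h2 : (r2*r2) * (star y ⬝ᵥ y).re = 1 := by
        rw [dot_smul_self, Complex.conj_ofReal, ← Complex.ofReal_mul] at hunit2
        have := congrArg Complex.re hunit2
        rwa [Complex.re_ofReal_mul, Complex.one_re] at this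
      have hT : 0 ≤ (star y ⬝ᵥ y).re := by
        rw [dot_star_self, Complex.ofReal_re]; exact dot_star_self_nonneg y
      have hkey : (r2*r2) * (2 * (star y ⬝ᵥ Cc *ᵥ y).re) ≤ lam2 := by
        rw [← hMre, ← hgval]; exact hbound
      have hmul := mul_le_mul_of_nonneg_right hkey hT
      have hL : ((r2*r2) * (2 * (star y ⬝ᵥ Cc *ᵥ y).re)) * (star y ⬝ᵥ y).re
          = 2 * (star y ⬝ᵥ Cc *ᵥ y).re := by
        rw [show ((r2*r2) * (2 * (star y ⬝ᵥ Cc *ᵥ y).re)) * (star y ⬝ᵥ y).re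
          = (2 * (star y ⬝ᵥ Cc *ᵥ y).re) * ((r2*r2) * (star y ⬝ᵥ y).re) by ring, h2, mul_one]
      rw [hL] at hmul
      have hgoal : (w - (w - lam2/2)) = lam2/2 := by ring
      rw [hgoal]
      linarith
  · refine ⟨w + 1, by have := w_nonneg hw; linarith, ?_⟩
    intro y hyperp
    have hy0 : y = 0 := by
      by_contra hy0
      obtain ⟨r2, hr2, hunit2⟩ := exists_unit_smul hy0
      refine hDne ⟨(r2:ℂ) • y, hunit2, ?_⟩
      show star (cv v) ⬝ᵥ ((r2:ℂ) • y) = 0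
      rw [dotProduct_smul, hyperp, smul_zero]
    subst hy0
    simp

/-- (3) implies (1) -/
lemma imp31 (hn : 0 < n) (hnn : ∀ i j, 0 ≤ C i j)
    (hirr : ∀ i j : Fin n, Relation.ReflTransGen (fun u v => 0 < C u v) i j)
    (hw : IsGreatest ((fun z : ℂ => ‖z‖) '' numRange (C.map (fun x : ℝ => (x:ℂ)))) w)
    (h3 : ∃ v : Fin n → ℝ, (∀ i, 0 < v i) ∧ C.mulVec v = sSup (Rset C) • v
      ∧ Matrix.vecMul v C = sSup (Rset C) • v) :
    ∃ θ c : ℝ, 0 < c ∧ ∀ z ∈ numRange (C.map (fun x : ℝ => (x:ℂ))),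
      c * ‖z - (w:ℂ)‖ ≤
        (Complex.exp (-(θ:ℂ) * Complex.I) * (z - (w:ℂ))).re := by
  obtain ⟨v0, hv0pos, hCv0, hv0C⟩ := h3
  have hv0ne : v0 ≠ 0 := fun h => absurd (congrFun h ⟨0,hn⟩) (hv0pos ⟨0,hn⟩).ne'
  set t := v0 ⬝ᵥ v0 with ht
  have htpos : 0 < t := dot_self_pos hv0ne
  set r := (Real.sqrt t)⁻¹ with hr
  have hrpos : 0 < r := by rw [hr]; positivity
  have hrr : r * r * t = 1 := by
    rw [hr, ← mul_inv, Real.mul_self_sqrt htpos.le]; field_simp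
  set v := r • v0 with hv
  have hvpos : ∀ i, 0 < v i := fun i => by
    rw [hv]; simp only [Pi.smul_apply, smul_eq_mul]; exact mul_pos hrpos (hv0pos i)
  have hvv : v ⬝ᵥ v = 1 := by
    rw [hv, smul_dotProduct, dotProduct_smul, ← ht, smul_eq_mul, smul_eq_mul, ← mul_assoc, hrr]
  have hCv : C *ᵥ v = sSup (Rset C) • v := by
    rw [hv, Matrix.mulVec_smul, hCv0, smul_comm]
  have hvC : v ᵥ* C = sSup (Rset C) • v := by
    rw [hv, Matrix.smul_vecMul, hv0C, smul_comm]
  have hwp : w = sSup (Rset C) := rho_eq_w_of_common hn hnn hw hvpos hCv hvC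
  rw [← hwp] at hCv hvC
  obtain ⟨δ, hδ, hgapb⟩ := gap_lemma hnn hirr hw hvpos hvv hCv hvC
  have hw0 : 0 ≤ w := w_nonneg hw
  have h2w1 : (0:ℝ) < 2*w + 1 := by linarith
  set c := δ / (2*w+1) with hc
  have hcpos : 0 < c := div_pos hδ h2w1
  refine ⟨Real.pi, c, hcpos, ?_⟩
  rintro z ⟨x, hx, rfl⟩
  set Cc := C.map (fun x : ℝ => (x:ℂ)) with hCc
  set α := star (cv v) ⬝ᵥ x with hα
  set y := x - α • cv v with hy
  have hyperp : star (cv v) ⬝ᵥ y = 0 := by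
    rw [hy, dotProduct_sub, dotProduct_smul, unit_cv hvv, smul_eq_mul, mul_one, ← hα, sub_self]
  have hxdec : x = α • cv v + y := by rw [hy]; abel
  have hvform : v ⬝ᵥ C *ᵥ v = w := by
    rw [hCv, dotProduct_smul, hvv, smul_eq_mul, mul_one]
  have hCcv : Cc *ᵥ cv v = ((w:ℝ):ℂ) • cv v := by rw [hCc, cv_mulVec, hCv, cv_smul]
  have hvCc : (cv v) ᵥ* Cc = ((w:ℝ):ℂ) • cv v := by rw [hCc, cv_vecMul, hvC, cv_smul]
  have t2 : star (cv v) ⬝ᵥ (Cc *ᵥ y) = 0 := by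
    rw [dotProduct_mulVec, star_cv, hvCc, smul_dotProduct, smul_eq_mul, ← star_cv, hyperp,
      mul_zero]
  have t3 : star y ⬝ᵥ cv v = 0 := by rw [star_dot_conj, hyperp, map_zero]
  have e1 : star (α • cv v) ⬝ᵥ Cc *ᵥ (α • cv v) = (starRingEnd ℂ) α * α * (w:ℂ) := by
    rw [form_smul, hCc, form_cv, hvform]
  have e2 : star (α • cv v) ⬝ᵥ Cc *ᵥ y = 0 := by rw [star_smul_dot, t2, mul_zero]
  have e3 : star y ⬝ᵥ Cc *ᵥ (α • cv v) = 0 := by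
    rw [Matrix.mulVec_smul, dotProduct_smul, hCcv, dotProduct_smul, t3]
    simp
  have hzform : star x ⬝ᵥ Cc *ᵥ x = (starRingEnd ℂ) α * α * (w:ℂ) + star y ⬝ᵥ Cc *ᵥ y := by
    conv_lhs => rw [hxdec]
    rw [form_add, e1, e2, e3, add_zero, add_zero]
  have f1 : star (α • cv v) ⬝ᵥ (α • cv v) = (starRingEnd ℂ) α * α := by
    rw [dot_smul_self, unit_cv hvv, mul_one]
  have f2 : star (α • cv v) ⬝ᵥ y = 0 := by rw [star_smul_dot, hyperp, mul_zero]
  have f3 : star y ⬝ᵥ (α • cv v) = 0 := by rw [dotProduct_smul, t3]; simp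
  have hnorm : (starRingEnd ℂ) α * α + star y ⬝ᵥ y = 1 := by
    rw [← hx]
    conv_rhs => rw [hxdec]
    rw [dot_add_star, f1, f2, f3, add_zero, add_zero]
  set A2 := Complex.normSq α with hA2def
  have hA2 : ((A2:ℝ):ℂ) = (starRingEnd ℂ) α * α := Complex.normSq_eq_conj_mul_self
  set sv := (star y ⬝ᵥ y).re with hsv
  have hsplit : A2 + sv = 1 := by
    have := congrArg Complex.re hnorm
    rwa [Complex.add_re, ← hA2, Complex.ofReal_re, Complex.one_re] at this
  have hs0 : 0 ≤ sv := by
    rw [hsv, dot_star_self, Complex.ofReal_re]; exact dot_star_self_nonneg y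
  have hFabs : ‖star y ⬝ᵥ Cc *ᵥ y‖ ≤ w * sv := by
    have := abs_form_le_w hw y
    rwa [← hCc, ← hsv] at this
  have hFre : (star y ⬝ᵥ Cc *ᵥ y).re ≤ (w - δ) * sv := hgapb y hyperp
  have hzre : (star x ⬝ᵥ Cc *ᵥ x).re = A2 * w + (star y ⬝ᵥ Cc *ᵥ y).re := by
    rw [hzform, ← hA2, Complex.add_re, ← Complex.ofReal_mul, Complex.ofReal_re]
  have hzsub : star x ⬝ᵥ Cc *ᵥ x - ((w:ℝ):ℂ) = star y ⬝ᵥ Cc *ᵥ y - ((sv*w:ℝ):ℂ) := by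
    rw [hzform, ← hA2]
    have hA2' : A2 = 1 - sv := by linarith
    rw [hA2']
    push_cast
    ring
  have habsz : ‖star x ⬝ᵥ Cc *ᵥ x - ((w:ℝ):ℂ)‖ ≤ 2*w*sv := by
    rw [hzsub]
    calc ‖star y ⬝ᵥ Cc *ᵥ y - ((sv*w:ℝ):ℂ)‖
        ≤ ‖star y ⬝ᵥ Cc *ᵥ y‖ + ‖((sv*w:ℝ):ℂ)‖ := by
          simpa [sub_eq_add_neg] using norm_add_le (star y ⬝ᵥ Cc *ᵥ y) (-((sv*w:ℝ):ℂ))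
      _ ≤ w * sv + sv * w := by
          refine add_le_add hFabs ?_
          rw [Complex.norm_real, Real.norm_eq_abs, _root_.abs_of_nonneg (mul_nonneg hs0 hw0)]
      _ = 2*w*sv := by ring
  have hexp : Complex.exp (-(Real.pi:ℂ) * Complex.I) = -1 := by
    rw [neg_mul, Complex.exp_neg, Complex.exp_pi_mul_I]
    norm_num
  have hRHS : (Complex.exp (-(Real.pi:ℂ) * Complex.I) * (star x ⬝ᵥ Cc *ᵥ x - ((w:ℝ):ℂ))).re
      = w - (star x ⬝ᵥ Cc *ᵥ x).re := by
    rw [hexp, neg_one_mul, Complex.neg_re, Complex.sub_re, Complex.ofReal_re]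
    ring
  have hc' : c * (2*w+1) = δ := div_mul_cancel₀ δ h2w1.ne'
  have ee1 : c * ‖star x ⬝ᵥ Cc *ᵥ x - ((w:ℝ):ℂ)‖ ≤ c * (2*w*sv) :=
    mul_le_mul_of_nonneg_left habsz hcpos.le
  have ee2 : δ*sv - c*(2*w*sv) = c*sv := by rw [← hc']; ring
  have ee3 : 0 ≤ c*sv := mul_nonneg hcpos.le hs0
  have ee4 : δ*sv ≤ w - (star x ⬝ᵥ Cc *ᵥ x).re := by
    rw [hzre]
    nlinarith [hsplit, hFre]
  rw [hRHS]
  linarith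

end Imp31b

end SharpPt

/-- for an irreducible nonnegative matrix `C` with numerical radius `w` and
spectral radius `ρ`, the following are equivalent: `w` is a sharp point of `W(C)`;
`w = ρ`; `C` has a common left and right Perron eigenvector. -/
theorem irreducible_nonneg_sharp_point {n : ℕ} (hn : 0 < n)
    (C : Matrix (Fin n) (Fin n) ℝ) (hnn : ∀ i j, 0 ≤ C i j)
    (hirr : ∀ i j : Fin n, Relation.ReflTransGen (fun u v => 0 < C u v) i j) :
    let Cc := C.map (fun x : ℝ => (x : ℂ))
    let w := sSup ((fun z : ℂ => ‖z‖) '' numRange Cc)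
    let ρ := sSup {x : ℝ | ∃ z ∈ Cc.charpoly.roots, x = ‖z‖}
    List.TFAE [
      ∃ θ c : ℝ, 0 < c ∧ ∀ z ∈ numRange Cc,
        c * ‖z - (w : ℂ)‖ ≤
          (Complex.exp (-(θ : ℂ) * Complex.I) * (z - (w : ℂ))).re,
      w = ρ,
      ∃ v : Fin n → ℝ, (∀ i, 0 < v i) ∧ C.mulVec v = ρ • v ∧ Matrix.vecMul v C = ρ • v] := by
  intro Cc w ρ
  have hw : IsGreatest ((fun z : ℂ => ‖z‖) '' numRange (C.map (fun x : ℝ => (x : ℂ)))) w :=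
    SharpPt.isGreatest_w hn _
  tfae_have 1 → 2 := fun h1 => SharpPt.imp12 hn hnn hw h1
  tfae_have 2 → 3 := fun h2 => SharpPt.imp23 hn hnn hirr hw h2
  tfae_have 3 → 1 := fun h3 => SharpPt.imp31 hn hnn hirr hw h3
  tfae_finish

end
end
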